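/- arXiv:0910.2592 — 7 statements merged into one kernel-verified Lean document; each statement's English description precedes it below -/
import Mathlib

section
/- Let n and e be positive integers with 1 ≤ e ≤ n, and let c be any integer. Then the number of e-element subsets J of [1,n] such that c(J) = c and n ∈ J is C(e−1, c−1)·C(n−e, c−1). -/
/-- Binomial coefficient `C(a,b)` for integers, with the convention that it is `0`
when `a < 0` or `b < 0` (and, as usual, when `b > a`), and `C(a,0) = 1` for `a ≥ 0`. -/
def intChoose (a b : ℤ) : ℕ :=
  if 0 ≤ a ∧ 0 ≤ b then a.toNat.choose b.toNat else 0

/-- The number of connected components of a finite set of integers: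
`c(J) = |{j ∈ J : j+1 ∉ J}|`. -/
def numComponents (J : Finset ℕ) : ℕ := (J.filter (fun j => j + 1 ∉ J)).card

/-
Adding `n + 1` on top of a set `J ⊆ [1, n]` creates a new component exactly when `n ∉ J`.
Hence, splitting according to whether the top element lies in `J`, the numbers `b(n, e, c)`
of `e`-element subsets of `[1, n]` with `c` components and `a(n, e, c)` of those containing `n`
satisfy
`b(n + 1, e, c) = b(n, e, c) + a(n + 1, e, c)` and
`a(n + 2, e + 1, c + 1) = a(n + 1, e, c + 1) + b(n, e, c)`,
and Pascal's rule shows that `C(e - 1, c - 1) · C(n - e, c - 1)` and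
`C(e - 1, c - 1) · C(n - e + 1, c)` solve this recursion.
-/

open Finset

theorem numComponents_pos {J : Finset ℕ} (hJ : J.Nonempty) : 0 < numComponents J :=
  card_pos.mpr ⟨J.max' hJ, mem_filter.mpr ⟨J.max'_mem hJ, fun h => by
    have := J.le_max' _ h
    omega⟩⟩

theorem numComponents_insert_succ {J : Finset ℕ} {a : ℕ} (h : ∀ j ∈ J, j ≤ a) :
    numComponents (insert (a + 1) J) = numComponents J + if a ∈ J then 0 else 1 := by
  have hends : {j ∈ insert (a + 1) J | j + 1 ∉ insert (a + 1) J}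
      = insert (a + 1) ({j ∈ J | j + 1 ∉ J}.erase a) := by
    ext j
    have := h j
    have := h (a + 1)
    have := h (a + 2)
    simp only [mem_filter, mem_insert, mem_erase]
    grind
  have hnew : a + 1 ∉ {j ∈ J | j + 1 ∉ J}.erase a := fun hmem => by
    have := h _ (mem_filter.mp (mem_of_mem_erase hmem)).1
    omega
  have hend_a : a ∈ {j ∈ J | j + 1 ∉ J} ↔ a ∈ J :=
    ⟨fun h' => (mem_filter.mp h').1, fun ha => mem_filter.mpr ⟨ha, fun h' => by
      have := h _ h'
      omega⟩⟩
  rw [numComponents, numComponents, hends, card_insert_of_notMem hnew, card_erase_eq_ite]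
  by_cases ha : a ∈ J
  · have := card_pos.mpr ⟨a, hend_a.mpr ha⟩
    simp only [hend_a, ha, if_true]
    omega
  · simp [hend_a, ha]

theorem card_filter_powerset_Icc_succ (n : ℕ) (p : Finset ℕ → Prop) [DecidablePred p] :
    #{J ∈ (Icc 1 (n + 1)).powerset | p J} =
      #{J ∈ (Icc 1 n).powerset | p J} + #{J ∈ (Icc 1 n).powerset | p (insert (n + 1) J)} := by
  rw [← insert_Icc_right_eq_Icc_add_one (by omega), card_filter, card_filter, card_filter,
    sum_powerset_insert (by simp)]

def numSubsets (n e c : ℕ) : ℕ :=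
  #{J ∈ (Icc 1 n).powerset | #J = e ∧ numComponents J = c}

def numSubsetsWithTop (n e c : ℕ) : ℕ :=
  #{J ∈ (Icc 1 n).powerset | #J = e ∧ numComponents J = c ∧ n ∈ J}

theorem numSubsetsWithTop_succ (n e c : ℕ) :
    numSubsetsWithTop (n + 1) e c =
      #{J ∈ (Icc 1 n).powerset |
        #(insert (n + 1) J) = e ∧ numComponents (insert (n + 1) J) = c} := by
  have hnone : #{J ∈ (Icc 1 n).powerset | #J = e ∧ numComponents J = c ∧ n + 1 ∈ J} = 0 :=
    card_eq_zero.mpr <| filter_eq_empty_iff.mpr fun J hJ h => by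
      simpa using mem_powerset.mp hJ h.2.2
  rw [numSubsetsWithTop, card_filter_powerset_Icc_succ, hnone, zero_add]
  simp only [mem_insert_self, and_true]

theorem numSubsets_succ (n e c : ℕ) :
    numSubsets (n + 1) e c = numSubsets n e c + numSubsetsWithTop (n + 1) e c := by
  rw [numSubsets, numSubsets, card_filter_powerset_Icc_succ, numSubsetsWithTop_succ]

theorem numSubsetsWithTop_succ_succ (n e c : ℕ) :
    numSubsetsWithTop (n + 1) (e + 1) c =
      #{J ∈ (Icc 1 n).powerset | #J = e ∧ numComponents J + (if n ∈ J then 0 else 1) = c} := by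
  rw [numSubsetsWithTop_succ]
  refine congrArg card (filter_congr fun J hJ => ?_)
  have hle : ∀ j ∈ J, j ≤ n := fun j hj => (mem_Icc.mp (mem_powerset.mp hJ hj)).2
  have hnew : n + 1 ∉ J := fun h => by have := hle _ h; omega
  rw [card_insert_of_notMem hnew, numComponents_insert_succ hle, Nat.add_right_cancel_iff]

theorem numSubsetsWithTop_add_two (n e c : ℕ) :
    numSubsetsWithTop (n + 2) (e + 1) (c + 1) =
      numSubsetsWithTop (n + 1) e (c + 1) + numSubsets n e c := by
  rw [numSubsetsWithTop_succ_succ, card_filter_powerset_Icc_succ, numSubsetsWithTop_succ, add_comm,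
    numSubsets]
  congr 2
  · simp
  · refine filter_congr fun J hJ => ?_
    have hnew : n + 1 ∉ J := fun h => by simpa using mem_powerset.mp hJ h
    simp [hnew]

theorem numSubsets_size_zero (n c : ℕ) : numSubsets n 0 c = if c = 0 then 1 else 0 := by
  have hempty : ∀ J : Finset ℕ, (#J = 0 ∧ numComponents J = c) ↔ (J = ∅ ∧ c = 0) := fun J => by
    rw [card_eq_zero]
    constructor <;> rintro ⟨rfl, rfl⟩ <;> exact ⟨rfl, rfl⟩
  rw [numSubsets, filter_congr fun J _ => hempty J]
  by_cases hc : c = 0 <;> simp [hc, filter_eq']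

theorem numSubsetsWithTop_size_zero (n c : ℕ) : numSubsetsWithTop n 0 c = 0 :=
  card_eq_zero.mpr <| filter_eq_empty_iff.mpr fun J _ h => by
    simpa [card_eq_zero.mp h.1] using h.2.2

theorem numSubsets_components_zero (n e : ℕ) : numSubsets n (e + 1) 0 = 0 :=
  card_eq_zero.mpr <| filter_eq_empty_iff.mpr fun J _ h =>
    (numComponents_pos (card_pos.mp (by omega))).ne' h.2

theorem numSubsets_of_lt_size {n e : ℕ} (h : n < e) (c : ℕ) : numSubsets n e c = 0 :=
  card_eq_zero.mpr <| filter_eq_empty_iff.mpr fun J hJ hcard => by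
    have := card_le_card (mem_powerset.mp hJ)
    simp only [Nat.card_Icc] at this
    omega

theorem numSubsetsWithTop_eq_and_numSubsets_eq (m : ℕ) :
    (∀ e c, e ≤ m → numSubsetsWithTop (m + 1) (e + 1) (c + 1) = e.choose c * (m - e).choose c) ∧
    (∀ e c, e ≤ m → numSubsets m (e + 1) (c + 1) = e.choose c * (m - e).choose (c + 1)) := by
  induction m with
  | zero =>
    refine ⟨fun e c he => ?_, fun e c he => ?_⟩
    · obtain rfl : e = 0 := by omega
      rw [numSubsetsWithTop_succ_succ]
      rcases c with _ | c <;> simp [numComponents, filter_singleton]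
    · rw [numSubsets_of_lt_size (by omega)]
      simp
  | succ m ih =>
    have hTop : ∀ e c, e ≤ m + 1 →
        numSubsetsWithTop (m + 2) (e + 1) (c + 1) = e.choose c * (m + 1 - e).choose c := by
      rintro (_ | e) c he
      · rw [numSubsetsWithTop_add_two, numSubsetsWithTop_size_zero, numSubsets_size_zero]
        rcases c with _ | c <;> simp
      · rw [numSubsetsWithTop_add_two, ih.1 e c (by omega), show m + 1 - (e + 1) = m - e by omega]
        rcases c with _ | c
        · simp [numSubsets_components_zero]
        · rw [ih.2 e c (by omega), Nat.choose_succ_succ' e c]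
          ring
    refine ⟨hTop, fun e c he => ?_⟩
    rcases he.lt_or_eq with hlt | rfl
    · rw [numSubsets_succ, ih.2 e c (by omega), ih.1 e c (by omega),
        show m + 1 - e = m - e + 1 by omega, Nat.choose_succ_succ' (m - e) c]
      ring
    · rw [numSubsets_of_lt_size (by omega)]
      simp

theorem intChoose_natCast (a b : ℕ) : intChoose a b = a.choose b := by
  simp [intChoose]

/-- The number of `e`-element subsets `J` of `[1,n]` with `c(J) = c` containing `n` is
`C(e−1, c−1) · C(n−e, c−1)`. -/
theorem num_subsets_with_components_containing_top (n e : ℕ) (he : 1 ≤ e) (hn : e ≤ n)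
    (c : ℤ) :
    ((Finset.Icc 1 n).powerset.filter
        (fun J => J.card = e ∧ (numComponents J : ℤ) = c ∧ n ∈ J)).card
      = intChoose ((e : ℤ) - 1) (c - 1) * intChoose ((n : ℤ) - e) (c - 1) := by
  rcases le_or_gt c 0 with hc | hc
  · have hnone : ∀ J ∈ (Icc 1 n).powerset,
        ¬ (#J = e ∧ (numComponents J : ℤ) = c ∧ n ∈ J) := fun J _ h => by
      have := numComponents_pos ⟨n, h.2.2⟩
      omega
    rw [filter_false_of_mem hnone, card_empty, intChoose, if_neg (by omega), zero_mul]
  obtain ⟨k, rfl⟩ : ∃ k : ℕ, c = k + 1 := ⟨c.toNat - 1, by omega⟩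
  obtain ⟨e, rfl⟩ : ∃ e' : ℕ, e = e' + 1 := ⟨e - 1, by omega⟩
  obtain ⟨m, rfl⟩ : ∃ m : ℕ, n = m + 1 := ⟨n - 1, by omega⟩
  have hcount := (numSubsetsWithTop_eq_and_numSubsets_eq m).1 e k (by omega)
  rw [show ((m + 1 : ℕ) : ℤ) - (e + 1 : ℕ) = (m - e : ℕ) by omega]
  push_cast
  simp only [add_sub_cancel_right, intChoose_natCast]
  exact_mod_cast hcount
end

section
/- For all integers n ≥ 0 and e1, e2 ≥ 0, the number of pairs (T1, T2) with T1 ⊆ [1,n+1], T2 ⊆ [1,n], |T1| = e1, |T2| = e2, such that for every k ∈ T2 both k ∈ T1 and k+1 ∈ T1, equals C(n+1−e2, n+1−e1)·C(e1−1, e2) + δ_{e1,0}·δ_{e2,0}, where δ denotes the Kronecker delta. -/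
open Finset

lemma intChoose_eq_zero {a b : ℤ} (h : a < 0 ∨ b < 0 ∨ a < b) : intChoose a b = 0 := by
  unfold intChoose
  split
  · next hc => exact Nat.choose_eq_zero_of_lt (by omega)
  · rfl

lemma intChoose_zero_right {a : ℤ} (h : 0 ≤ a) : intChoose a 0 = 1 := by
  simp [intChoose, h]

lemma intChoose_self {a : ℤ} (h : 0 ≤ a) : intChoose a a = 1 := by
  simp [intChoose, h, Nat.choose_self]

lemma intChoose_congr {a b a' b' : ℤ} (ha : a = a') (hb : b = b') :
    intChoose a b = intChoose a' b' := by rw [ha, hb]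

lemma intChoose_pascal (a : ℤ) {b : ℤ} (hb : 1 ≤ b) :
    intChoose a b = intChoose (a-1) (b-1) + intChoose (a-1) b := by
  rcases le_or_gt 1 a with ha | ha
  · unfold intChoose
    rw [if_pos ⟨by omega, by omega⟩, if_pos ⟨by omega, by omega⟩, if_pos ⟨by omega, by omega⟩]
    have h1 : a.toNat = (a-1).toNat + 1 := by omega
    have h2 : b.toNat = (b-1).toNat + 1 := by omega
    rw [h1, h2, Nat.choose_succ_succ]
  · rcases le_or_gt 0 a with ha0 | ha0
    · have h0 : a = 0 := by omega
      subst h0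
      rw [intChoose_eq_zero (by omega), intChoose_eq_zero (by omega),
        intChoose_eq_zero (by omega)]
    · rw [intChoose_eq_zero (by omega), intChoose_eq_zero (by omega),
        intChoose_eq_zero (by omega)]

def Fset (n e1 e2 : ℕ) : Finset (Finset ℕ × Finset ℕ) :=
  ((Finset.Icc 1 (n + 1)).powerset ×ˢ (Finset.Icc 1 n).powerset).filter
        (fun T => T.1.card = e1 ∧ T.2.card = e2 ∧
          ∀ k ∈ T.2, k ∈ T.1 ∧ k + 1 ∈ T.1)

def Gset (n e1 e2 : ℕ) : Finset (Finset ℕ × Finset ℕ) :=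
  (Fset n e1 e2).filter (fun T => n + 1 ∈ T.1)

lemma mem_Fset {n e1 e2 : ℕ} {T : Finset ℕ × Finset ℕ} : T ∈ Fset n e1 e2 ↔
    T.1 ⊆ Icc 1 (n+1) ∧ T.2 ⊆ Icc 1 n ∧ T.1.card = e1 ∧ T.2.card = e2 ∧
      ∀ k ∈ T.2, k ∈ T.1 ∧ k + 1 ∈ T.1 := by
  simp [Fset, Finset.mem_filter, Finset.mem_product, and_assoc]

lemma mem_Gset {n e1 e2 : ℕ} {T : Finset ℕ × Finset ℕ} : T ∈ Gset n e1 e2 ↔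
    (T.1 ⊆ Icc 1 (n+1) ∧ T.2 ⊆ Icc 1 n ∧ T.1.card = e1 ∧ T.2.card = e2 ∧
      ∀ k ∈ T.2, k ∈ T.1 ∧ k + 1 ∈ T.1) ∧ n + 1 ∈ T.1 := by
  rw [Gset, Finset.mem_filter, mem_Fset]

lemma filter_not_top (n e1 e2 : ℕ) :
    (Fset (n+1) e1 e2).filter (fun T => (n+2) ∉ T.1) = Fset n e1 e2 := by
  ext T
  rw [Finset.mem_filter, mem_Fset, mem_Fset]
  constructor
  · rintro ⟨⟨h1, h2, h3, h4, h5⟩, h6⟩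
    refine ⟨?_, ?_, h3, h4, h5⟩
    · intro x hx
      have hx1 := h1 hx
      rw [Finset.mem_Icc] at hx1 ⊢
      have : x ≠ n + 2 := fun h => h6 (h ▸ hx)
      omega
    · intro k hk
      have hk2 := h2 hk
      have hk1 := (h5 k hk).2
      have hk3 := h1 hk1
      rw [Finset.mem_Icc] at hk2 hk3 ⊢
      have : k + 1 ≠ n + 2 := fun h => h6 (h ▸ hk1)
      omega
  · rintro ⟨h1, h2, h3, h4, h5⟩
    have hsub : T.1 ⊆ Icc 1 (n+2) := h1.trans (Finset.Icc_subset_Icc_right (by omega))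
    refine ⟨⟨hsub, h2.trans (Finset.Icc_subset_Icc_right (by omega)), h3, h4, h5⟩, ?_⟩
    intro hmem
    have := h1 hmem
    rw [Finset.mem_Icc] at this
    omega

lemma Fcard_split (n e1 e2 : ℕ) :
    (Fset (n+1) e1 e2).card = (Fset n e1 e2).card + (Gset (n+1) e1 e2).card := by
  have h := Finset.card_filter_add_card_filter_not
    (s := Fset (n+1) e1 e2) (p := fun T => n + 2 ∈ T.1)
  rw [filter_not_top] at h
  have hg : Gset (n+1) e1 e2 = (Fset (n+1) e1 e2).filter (fun T => n + 2 ∈ T.1) := rfl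
  rw [hg]
  omega

lemma GA (n e1 e2 : ℕ) :
    ((Gset (n+1) (e1+1) e2).filter (fun T => (n+1) ∉ T.2)).card = (Fset n e1 e2).card := by
  refine Finset.card_bij' (fun T _ => (T.1.erase (n+2), T.2))
    (fun B _ => (insert (n+2) B.1, B.2)) ?_ ?_ ?_ ?_
  case refine_1 =>
    rintro T hT
    rw [Finset.mem_filter, mem_Gset] at hT
    obtain ⟨⟨⟨h1, h2, h3, h4, h5⟩, h6⟩, h7⟩ := hT
    have h6' : n + 2 ∈ T.1 := h6
    rw [mem_Fset]
    refine ⟨?_, ?_, ?_, h4, ?_⟩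
    · intro x hx
      rw [Finset.mem_erase] at hx
      have := h1 hx.2
      rw [Finset.mem_Icc] at this ⊢
      omega
    · intro k hk
      have hk2 := h2 hk
      rw [Finset.mem_Icc] at hk2 ⊢
      have : k ≠ n + 1 := fun h => h7 (h ▸ hk)
      omega
    · rw [Finset.card_erase_of_mem h6', h3]; omega
    · intro k hk
      have hk2 := h2 hk
      rw [Finset.mem_Icc] at hk2
      have hne : k ≠ n + 1 := fun h => h7 (h ▸ hk)
      obtain ⟨hm1, hm2⟩ := h5 k hk
      constructor
      · rw [Finset.mem_erase]; exact ⟨by omega, hm1⟩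
      · rw [Finset.mem_erase]; exact ⟨by omega, hm2⟩
  case refine_3 =>
    rintro T hT
    rw [Finset.mem_filter, mem_Gset] at hT
    obtain ⟨⟨⟨-, -, -, -, -⟩, h6⟩, -⟩ := hT
    have h6' : n + 2 ∈ T.1 := h6
    simp [Prod.ext_iff, Finset.insert_erase h6']
  case refine_4 =>
    rintro B hB
    rw [mem_Fset] at hB
    have hnotin : n + 2 ∉ B.1 := by
      intro h; have := hB.1 h; rw [Finset.mem_Icc] at this; omega
    simp [Prod.ext_iff, Finset.erase_insert hnotin]
  case refine_2 =>
    rintro B hB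
    rw [mem_Fset] at hB
    obtain ⟨h1, h2, h3, h4, h5⟩ := hB
    have hnotin : n + 2 ∉ B.1 := by
      intro h; have := h1 h; rw [Finset.mem_Icc] at this; omega
    rw [Finset.mem_filter, mem_Gset]
    have hm : (n : ℕ) + 1 + 1 ∈ insert (n+2) B.1 := Finset.mem_insert_self _ _
    refine ⟨⟨⟨?_, ?_, ?_, h4, ?_⟩, hm⟩, ?_⟩
    · intro x hx
      rw [Finset.mem_insert] at hx
      rcases hx with h | h
      · rw [Finset.mem_Icc]; omega
      · have := h1 h; rw [Finset.mem_Icc] at this ⊢; omega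
    · exact h2.trans (Finset.Icc_subset_Icc_right (by omega))
    · rw [Finset.card_insert_of_notMem hnotin, h3]
    · intro k hk
      obtain ⟨hm1, hm2⟩ := h5 k hk
      exact ⟨Finset.mem_insert_of_mem hm1, Finset.mem_insert_of_mem hm2⟩
    · intro h
      have := h2 h; rw [Finset.mem_Icc] at this; omega

lemma GB (n e1 e2 : ℕ) :
    ((Gset (n+1) (e1+1) (e2+1)).filter (fun T => (n+1) ∈ T.2)).card = (Gset n e1 e2).card := by
  refine Finset.card_bij' (fun T _ => (T.1.erase (n+2), T.2.erase (n+1)))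
    (fun B _ => (insert (n+2) B.1, insert (n+1) B.2)) ?_ ?_ ?_ ?_
  case refine_1 =>
    rintro T hT
    rw [Finset.mem_filter, mem_Gset] at hT
    obtain ⟨⟨⟨h1, h2, h3, h4, h5⟩, h6⟩, h7⟩ := hT
    have h6' : n + 2 ∈ T.1 := h6
    have hmem1 : n + 1 ∈ T.1 := (h5 _ h7).1
    rw [mem_Gset]
    refine ⟨⟨?_, ?_, ?_, ?_, ?_⟩, ?_⟩
    · intro x hx
      rw [Finset.mem_erase] at hx
      have := h1 hx.2
      rw [Finset.mem_Icc] at this ⊢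
      omega
    · intro k hk
      rw [Finset.mem_erase] at hk
      have := h2 hk.2
      rw [Finset.mem_Icc] at this ⊢
      omega
    · rw [Finset.card_erase_of_mem h6', h3]; omega
    · rw [Finset.card_erase_of_mem h7, h4]; omega
    · intro k hk
      rw [Finset.mem_erase] at hk
      obtain ⟨hne, hk⟩ := hk
      have hk2 := h2 hk
      rw [Finset.mem_Icc] at hk2
      obtain ⟨hm1, hm2⟩ := h5 k hk
      constructor
      · rw [Finset.mem_erase]; exact ⟨by omega, hm1⟩
      · rw [Finset.mem_erase]; exact ⟨by omega, hm2⟩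
    · rw [Finset.mem_erase]; exact ⟨by omega, hmem1⟩
  case refine_3 =>
    rintro T hT
    rw [Finset.mem_filter, mem_Gset] at hT
    obtain ⟨⟨⟨-, -, -, -, -⟩, h6⟩, h7⟩ := hT
    have h6' : n + 2 ∈ T.1 := h6
    simp [Prod.ext_iff, Finset.insert_erase h6', Finset.insert_erase h7]
  case refine_4 =>
    rintro B hB
    rw [mem_Gset] at hB
    obtain ⟨⟨h1, h2, -, -, -⟩, -⟩ := hB
    have hn1 : n + 2 ∉ B.1 := by
      intro h; have := h1 h; rw [Finset.mem_Icc] at this; omega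
    have hn2 : n + 1 ∉ B.2 := by
      intro h; have := h2 h; rw [Finset.mem_Icc] at this; omega
    simp [Prod.ext_iff, Finset.erase_insert hn1, Finset.erase_insert hn2]
  case refine_2 =>
    rintro B hB
    rw [mem_Gset] at hB
    obtain ⟨⟨h1, h2, h3, h4, h5⟩, h6⟩ := hB
    have hn1 : n + 2 ∉ B.1 := by
      intro h; have := h1 h; rw [Finset.mem_Icc] at this; omega
    have hn2 : n + 1 ∉ B.2 := by
      intro h; have := h2 h; rw [Finset.mem_Icc] at this; omega
    rw [Finset.mem_filter, mem_Gset]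
    have hm : (n : ℕ) + 1 + 1 ∈ insert (n+2) B.1 := Finset.mem_insert_self _ _
    refine ⟨⟨⟨?_, ?_, ?_, ?_, ?_⟩, hm⟩, Finset.mem_insert_self _ _⟩
    · intro x hx
      rw [Finset.mem_insert] at hx
      rcases hx with h | h
      · rw [Finset.mem_Icc]; omega
      · have := h1 h; rw [Finset.mem_Icc] at this ⊢; omega
    · intro x hx
      rw [Finset.mem_insert] at hx
      rcases hx with h | h
      · rw [Finset.mem_Icc]; omega
      · have := h2 h; rw [Finset.mem_Icc] at this ⊢; omega
    · rw [Finset.card_insert_of_notMem hn1, h3]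
    · rw [Finset.card_insert_of_notMem hn2, h4]
    · intro k hk
      rw [Finset.mem_insert] at hk
      rcases hk with h | h
      · subst h
        exact ⟨Finset.mem_insert_of_mem h6, Finset.mem_insert_self _ _⟩
      · obtain ⟨hm1, hm2⟩ := h5 k h
        exact ⟨Finset.mem_insert_of_mem hm1, Finset.mem_insert_of_mem hm2⟩

lemma Gcard_split0 (n e1 : ℕ) :
    (Gset (n+1) (e1+1) 0).card = (Fset n e1 0).card := by
  rw [← GA n e1 0]
  congr 1
  rw [Finset.filter_true_of_mem]
  intro T hT
  rw [mem_Gset] at hT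
  intro h
  have := Finset.card_eq_zero.mp hT.1.2.2.2.1
  rw [this] at h
  exact Finset.notMem_empty _ h

lemma Gcard_split (n e1 e2 : ℕ) :
    (Gset (n+1) (e1+1) (e2+1)).card = (Fset n e1 (e2+1)).card + (Gset n e1 e2).card := by
  have h := Finset.card_filter_add_card_filter_not
    (s := Gset (n+1) (e1+1) (e2+1)) (p := fun T => n + 1 ∈ T.2)
  rw [GB n e1 e2, GA n e1 (e2+1)] at h
  omega

lemma Fset_empty {n e1 e2 : ℕ} (h : n + 1 < e1 ∨ n < e2) : Fset n e1 e2 = ∅ := by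
  rw [Finset.eq_empty_iff_forall_notMem]
  intro T hT
  rw [mem_Fset] at hT
  obtain ⟨h1, h2, h3, h4, -⟩ := hT
  have c1 := Finset.card_le_card h1
  have c2 := Finset.card_le_card h2
  rw [Nat.card_Icc] at c1 c2
  omega

lemma Gset_zero (n e2 : ℕ) : Gset n 0 e2 = ∅ := by
  rw [Finset.eq_empty_iff_forall_notMem]
  intro T hT
  rw [Gset, Finset.mem_filter, mem_Fset] at hT
  obtain ⟨⟨-, -, h3, -, -⟩, h6⟩ := hT
  exact absurd (Finset.card_eq_zero.mp h3 ▸ h6) (Finset.notMem_empty _)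

lemma Gcard_zero (e1 e2 : ℕ) :
    (Gset 0 e1 e2).card
      = intChoose ((0:ℤ) - e2) ((0:ℤ) + 1 - e1) * intChoose ((e1:ℤ) - 1) e2 := by
  match e1, e2 with
  | 0, e2 =>
    rw [Gset_zero, Finset.card_empty,
      intChoose_eq_zero (b := (e2:ℤ)) (by norm_num), mul_zero]
  | 1, 0 =>
    have h : (Gset 0 1 0).card = 1 := by decide
    rw [h]; decide
  | 1, e2+1 =>
    have h : Fset 0 1 (e2+1) = ∅ := Fset_empty (by omega)
    rw [Gset, h, Finset.filter_empty, Finset.card_empty,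
      intChoose_eq_zero (a := (0:ℤ) - ((e2+1:ℕ):ℤ)) (by push_cast; omega), zero_mul]
  | e1+2, e2 =>
    have h : Fset 0 (e1+2) e2 = ∅ := Fset_empty (by omega)
    rw [Gset, h, Finset.filter_empty, Finset.card_empty,
      intChoose_eq_zero (b := (0:ℤ) + 1 - ((e1+2:ℕ):ℤ)) (by push_cast; omega), zero_mul]

lemma Fcard_zero (e1 e2 : ℕ) :
    (Fset 0 e1 e2).card
      = intChoose ((0:ℤ) + 1 - e2) ((0:ℤ) + 1 - e1) * intChoose ((e1:ℤ) - 1) e2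
        + (if e1 = 0 ∧ e2 = 0 then 1 else 0) := by
  match e1, e2 with
  | 0, 0 =>
    have h : (Fset 0 0 0).card = 1 := by decide
    rw [h]; decide
  | 1, 0 =>
    have h : (Fset 0 1 0).card = 1 := by decide
    rw [h]; decide
  | e1+2, 0 =>
    have h : Fset 0 (e1+2) 0 = ∅ := Fset_empty (by omega)
    rw [h, Finset.card_empty,
      intChoose_eq_zero (b := (0:ℤ) + 1 - ((e1+2:ℕ):ℤ)) (by push_cast; omega), zero_mul]
    simp
  | e1, e2+1 =>
    have h : Fset 0 e1 (e2+1) = ∅ := Fset_empty (by omega)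
    rw [h, Finset.card_empty]
    rcases le_or_gt (e1 : ℤ) ((e2+1:ℕ):ℤ) with hle | hlt
    · rw [intChoose_eq_zero (a := (e1:ℤ) - 1) (b := ((e2+1:ℕ):ℤ)) (by push_cast at hle ⊢; omega),
        mul_zero]
      simp
    · rw [intChoose_eq_zero (b := (0:ℤ) + 1 - (e1:ℤ)) (by push_cast at hlt ⊢; omega), zero_mul]
      simp

lemma main_card (n : ℕ) :
    (∀ e1 e2 : ℕ, (Gset n e1 e2).card
      = intChoose ((n:ℤ) - e2) ((n:ℤ) + 1 - e1) * intChoose ((e1:ℤ) - 1) e2)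
    ∧ (∀ e1 e2 : ℕ, (Fset n e1 e2).card
      = intChoose ((n:ℤ) + 1 - e2) ((n:ℤ) + 1 - e1) * intChoose ((e1:ℤ) - 1) e2
        + (if e1 = 0 ∧ e2 = 0 then 1 else 0)) := by
  induction n with
  | zero => exact ⟨Gcard_zero, Fcard_zero⟩
  | succ n ih =>
    obtain ⟨ihG, ihF⟩ := ih
    have hG : ∀ e1 e2 : ℕ, (Gset (n+1) e1 e2).card
        = intChoose (((n+1:ℕ):ℤ) - e2) (((n+1:ℕ):ℤ) + 1 - e1) * intChoose ((e1:ℤ) - 1) e2 := by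
      intro e1 e2
      match e1, e2 with
      | 0, e2 =>
        rw [Gset_zero, Finset.card_empty,
          intChoose_eq_zero (a := ((0:ℕ):ℤ) - 1) (by norm_num), mul_zero]
      | 1, 0 =>
        rw [Gcard_split0, ihF 0 0]
        rw [intChoose_eq_zero (a := ((0:ℕ):ℤ) - 1) (by norm_num), mul_zero, zero_add,
          if_pos ⟨rfl, rfl⟩]
        rw [intChoose_congr (a' := (n:ℤ)+1) (b' := (n:ℤ)+1) (by push_cast; try ring) (by push_cast; try ring),
          intChoose_self (by omega),
          intChoose_congr (a' := (0:ℤ)) (b' := (0:ℤ)) (by push_cast; try ring) (by push_cast; try ring),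
          intChoose_zero_right le_rfl]
      | e1+2, 0 =>
        rw [Gcard_split0, ihF (e1+1) 0]
        rw [if_neg (by omega), add_zero]
        rw [intChoose_congr (a := ((n:ℕ):ℤ)+1-((0:ℕ):ℤ)) (a' := ((n+1:ℕ):ℤ) - ((0:ℕ):ℤ))
            (b := ((n:ℕ):ℤ)+1-((e1+1:ℕ):ℤ)) (b' := ((n+1:ℕ):ℤ)+1-((e1+2:ℕ):ℤ))
            (by push_cast; try ring) (by push_cast; try ring)]
        rw [intChoose_congr (a := ((e1+1:ℕ):ℤ)-1) (b := ((0:ℕ):ℤ)) (a' := (e1:ℤ)) (b' := (0:ℤ))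
            (by push_cast; try ring) (by push_cast; try ring),
          intChoose_congr (a := ((e1+2:ℕ):ℤ)-1) (b := ((0:ℕ):ℤ)) (a' := (e1:ℤ)+1) (b' := (0:ℤ))
            (by push_cast; try ring) (by push_cast; try ring),
          intChoose_zero_right (by omega), intChoose_zero_right (by omega)]
      | e1+1, e2+1 =>
        rw [Gcard_split, ihF e1 (e2+1), ihG e1 e2]
        rw [if_neg (by omega), add_zero]
        have hp : intChoose (((e1+1:ℕ):ℤ) - 1) ((e2+1:ℕ):ℤ)
            = intChoose ((e1:ℤ) - 1) ((e2:ℤ)) + intChoose ((e1:ℤ) - 1) ((e2+1:ℕ):ℤ) := by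
          rw [intChoose_pascal (a := ((e1+1:ℕ):ℤ)-1) (b := ((e2+1:ℕ):ℤ)) (by push_cast; omega)]
          congr 1
          · exact intChoose_congr (by push_cast; try ring) (by push_cast; try ring)
          · exact intChoose_congr (by push_cast; try ring) (by push_cast; try ring)
        rw [hp]
        rw [intChoose_congr (a := ((n:ℕ):ℤ)+1-((e2+1:ℕ):ℤ)) (a' := ((n+1:ℕ):ℤ) - ((e2+1:ℕ):ℤ))
            (b := ((n:ℕ):ℤ)+1-((e1:ℕ):ℤ)) (b' := ((n+1:ℕ):ℤ)+1-((e1+1:ℕ):ℤ))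
            (by push_cast; try ring) (by push_cast; try ring)]
        rw [intChoose_congr (a := ((n:ℕ):ℤ)-((e2:ℕ):ℤ)) (a' := ((n+1:ℕ):ℤ) - ((e2+1:ℕ):ℤ))
            (b := ((n:ℕ):ℤ)+1-((e1:ℕ):ℤ)) (b' := ((n+1:ℕ):ℤ)+1-((e1+1:ℕ):ℤ))
            (by push_cast; try ring) (by push_cast; try ring)]
        ring
    refine ⟨hG, ?_⟩
    intro e1 e2
    rw [Fcard_split, ihF e1 e2, hG e1 e2]
    have key : intChoose ((n:ℤ)+1-e2) ((n:ℤ)+1-e1) * intChoose ((e1:ℤ) - 1) e2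
        + intChoose (((n+1:ℕ):ℤ) - e2) (((n+1:ℕ):ℤ)+1-e1) * intChoose ((e1:ℤ) - 1) e2
        = intChoose (((n+1:ℕ):ℤ)+1-e2) (((n+1:ℕ):ℤ)+1-e1) * intChoose ((e1:ℤ) - 1) e2 := by
      rcases le_or_gt (e1:ℤ) (e2:ℤ) with hle | hlt
      · rw [intChoose_eq_zero (a := (e1:ℤ)-1) (by omega)]
        ring
      · rcases le_or_gt (e1:ℤ) ((n:ℤ)+1) with h1 | h1
        · rw [intChoose_congr (a := (n:ℤ)+1-(e2:ℤ)) (b := (n:ℤ)+1-(e1:ℤ))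
              (a' := ((n+1:ℕ):ℤ)+1-(e2:ℤ)-1) (b' := ((n+1:ℕ):ℤ)+1-(e1:ℤ)-1)
              (by push_cast; try ring) (by push_cast; try ring),
            intChoose_congr (a := ((n+1:ℕ):ℤ)-(e2:ℤ)) (b := ((n+1:ℕ):ℤ)+1-(e1:ℤ))
              (a' := ((n+1:ℕ):ℤ)+1-(e2:ℤ)-1) (b' := ((n+1:ℕ):ℤ)+1-(e1:ℤ))
              (by push_cast; try ring) (by push_cast; try ring),
            ← add_mul,
            ← intChoose_pascal (((n+1:ℕ):ℤ)+1-(e2:ℤ)) (b := ((n+1:ℕ):ℤ)+1-(e1:ℤ))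
              (by push_cast; omega)]
        · rcases le_or_gt (e1:ℤ) ((n:ℤ)+2) with h2 | h2
          · have he1 : (e1:ℤ) = (n:ℤ)+2 := by omega
            rw [intChoose_eq_zero (a := (n:ℤ)+1-(e2:ℤ)) (b := (n:ℤ)+1-(e1:ℤ)) (by omega)]
            rw [intChoose_congr (a := ((n+1:ℕ):ℤ)-(e2:ℤ)) (b := ((n+1:ℕ):ℤ)+1-(e1:ℤ))
                (a' := (n:ℤ)+1-(e2:ℤ)) (b' := (0:ℤ)) (by push_cast; ring) (by push_cast; omega)]
            rw [intChoose_congr (a := ((n+1:ℕ):ℤ)+1-(e2:ℤ)) (b := ((n+1:ℕ):ℤ)+1-(e1:ℤ))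
                (a' := (n:ℤ)+2-(e2:ℤ)) (b' := (0:ℤ)) (by push_cast; ring) (by push_cast; omega)]
            rw [intChoose_zero_right (by omega), intChoose_zero_right (by omega)]
            ring
          · rw [intChoose_eq_zero (a := (n:ℤ)+1-(e2:ℤ)) (b := (n:ℤ)+1-(e1:ℤ)) (by omega),
              intChoose_eq_zero (a := ((n+1:ℕ):ℤ)-(e2:ℤ)) (b := ((n+1:ℕ):ℤ)+1-(e1:ℤ))
                (by push_cast; omega),
              intChoose_eq_zero (a := ((n+1:ℕ):ℤ)+1-(e2:ℤ)) (b := ((n+1:ℕ):ℤ)+1-(e1:ℤ))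
                (by push_cast; omega)]
            ring
    omega

/-- The number of pairs `(T1, T2)` with `T1 ⊆ [1,n+1]`, `T2 ⊆ [1,n]`, `|T1| = e1`,
`|T2| = e2`, such that for every `k ∈ T2` both `k ∈ T1` and `k+1 ∈ T1`, equals
`C(n+1−e2, n+1−e1) · C(e1−1, e2) + δ_{e1,0}·δ_{e2,0}`. -/
theorem card_coordinate_subreps_preprojective_kronecker (n e1 e2 : ℕ) :
    (((Finset.Icc 1 (n + 1)).powerset ×ˢ (Finset.Icc 1 n).powerset).filter
        (fun T => T.1.card = e1 ∧ T.2.card = e2 ∧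
          ∀ k ∈ T.2, k ∈ T.1 ∧ k + 1 ∈ T.1)).card
      = intChoose ((n : ℤ) + 1 - e2) ((n : ℤ) + 1 - e1) * intChoose ((e1 : ℤ) - 1) e2
        + (if e1 = 0 ∧ e2 = 0 then 1 else 0) := by
  exact (main_card n).2 e1 e2
end

section
/- For all integers n ≥ 0 and e1, e2 ≥ 0, the number of pairs (T1, T2) with T2 ⊆ T1 ⊆ [1,n], |T1| = e1, |T2| = e2, such that for every k ∈ T2 with k ≥ 2 one has k−1 ∈ T1, equals C(n−e2, n−e1)·C(e1, e2). -/
namespace KroneckerCount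

/-- The count in the theorem. -/
def Fc (n e1 e2 : ℕ) : ℕ :=
  (((Finset.Icc 1 n).powerset ×ˢ (Finset.Icc 1 n).powerset).filter
      (fun T => T.2 ⊆ T.1 ∧ T.1.card = e1 ∧ T.2.card = e2 ∧
        ∀ k ∈ T.2, 2 ≤ k → k - 1 ∈ T.1)).card

/-- Same count with the extra condition `n ∈ T.1`. -/
def Gc (n e1 e2 : ℕ) : ℕ :=
  (((Finset.Icc 1 n).powerset ×ˢ (Finset.Icc 1 n).powerset).filter
      (fun T => (T.2 ⊆ T.1 ∧ T.1.card = e1 ∧ T.2.card = e2 ∧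
        ∀ k ∈ T.2, 2 ≤ k → k - 1 ∈ T.1) ∧ n ∈ T.1)).card

/-- With extra conditions `n ∈ T.1` and `n ∉ T.2`. -/
def Ac (n e1 e2 : ℕ) : ℕ :=
  (((Finset.Icc 1 n).powerset ×ˢ (Finset.Icc 1 n).powerset).filter
      (fun T => ((T.2 ⊆ T.1 ∧ T.1.card = e1 ∧ T.2.card = e2 ∧
        ∀ k ∈ T.2, 2 ≤ k → k - 1 ∈ T.1) ∧ n ∈ T.1) ∧ ¬ n ∈ T.2)).card

/-- With extra conditions `n ∈ T.1` and `n ∈ T.2`. -/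
def Bc (n e1 e2 : ℕ) : ℕ :=
  (((Finset.Icc 1 n).powerset ×ˢ (Finset.Icc 1 n).powerset).filter
      (fun T => ((T.2 ⊆ T.1 ∧ T.1.card = e1 ∧ T.2.card = e2 ∧
        ∀ k ∈ T.2, 2 ≤ k → k - 1 ∈ T.1) ∧ n ∈ T.1) ∧ n ∈ T.2)).card

/-- Closed form for `Fc`. -/
def Fval (n e1 e2 : ℕ) : ℕ :=
  if e1 ≤ n then (n - e2).choose (n - e1) * e1.choose e2 else 0

/-- Closed form for `Gc`. -/
def Gval (n e1 e2 : ℕ) : ℕ :=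
  if e2 < e1 ∧ e1 ≤ n then (n - e2 - 1).choose (e1 - e2 - 1) * e1.choose e2
  else if e1 = e2 ∧ e1 = n ∧ 1 ≤ n then 1 else 0

/-! ### Arithmetic lemmas -/

lemma N1 (n e1 e2 : ℕ) : Fval (n + 1) e1 e2 = Fval n e1 e2 + Gval (n + 1) e1 e2 := by
  unfold Fval Gval
  split_ifs with h1 h2 h3 h4 h5 h6 <;> first | omega | (exfalso; omega) | skip
  · rw [(show n + 1 - e2 - 1 = n - e2 by omega), (show n + 1 - e2 = (n - e2) + 1 by omega),
      (show n + 1 - e1 = (n - e1) + 1 by omega), Nat.choose_succ_succ, add_mul]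
    have hs : (n - e2).choose (n - e1 + 1) = (n - e2).choose (e1 - e2 - 1) := by
      rw [← Nat.choose_symm (show n - e1 + 1 ≤ n - e2 by omega),
        (show n - e2 - (n - e1 + 1) = e1 - e2 - 1 by omega)]
    rw [hs]
  · rcases eq_or_lt_of_le (show e1 ≤ e2 by omega) with h | h
    · rw [← h]; simp [Nat.choose_self]
    · rw [Nat.choose_eq_zero_of_lt h]; simp
  · obtain rfl : e1 = n + 1 := by omega
    rw [(show n + 1 - (n + 1) = 0 by omega), Nat.choose_zero_right, one_mul, Nat.choose_self,
      one_mul, zero_add]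
  · obtain rfl : e1 = n + 1 := by omega
    obtain rfl : e2 = n + 1 := by omega
    simp [Nat.choose_self]
  · rw [Nat.choose_eq_zero_of_lt (show e1 < e2 by omega)]; simp

lemma N2 (n E F : ℕ) (hn : 1 ≤ n) :
    Gval (n + 1) (E + 1) (F + 1) = Fval n E (F + 1) + Gval n E F := by
  unfold Fval Gval
  split_ifs with h1 h2 h3 h4 h5 h6 <;> first | omega | (exfalso; omega) | skip
  · rw [(show n + 1 - (F + 1) - 1 = n - F - 1 by omega),
      (show E + 1 - (F + 1) - 1 = E - F - 1 by omega),
      (show n - (F + 1) = n - F - 1 by omega), Nat.choose_succ_succ, mul_add]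
    have hs : (n - F - 1).choose (n - E) = (n - F - 1).choose (E - F - 1) := by
      rw [← Nat.choose_symm (show E - F - 1 ≤ n - F - 1 by omega),
        (show n - F - 1 - (E - F - 1) = n - E by omega)]
    rw [hs]; ring
  · rw [Nat.choose_eq_zero_of_lt (show E < F + 1 by omega)]; simp
  · rw [Nat.choose_eq_zero_of_lt (show E < F + 1 by omega)]; simp

lemma N3 (n E : ℕ) : Gval (n + 1) (E + 1) 0 = Fval n E 0 := by
  unfold Fval Gval
  split_ifs with h1 h2 h3 <;> first | omega | (exfalso; omega) | skip
  rw [(show n + 1 - 0 - 1 = n by omega), (show E + 1 - 0 - 1 = E by omega),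
    (show n - 0 = n by omega), Nat.choose_zero_right, Nat.choose_zero_right, mul_one, mul_one]
  exact (Nat.choose_symm h2).symm

lemma Gval_zero_left (n e2 : ℕ) : Gval (n + 1) 0 e2 = 0 := by
  unfold Gval
  split_ifs with h1 h2
  · exfalso; omega
  · exact h2.2.1.elim
  · rfl

lemma Gval_zero (e1 e2 : ℕ) : Gval 0 e1 e2 = 0 := by
  unfold Gval
  split_ifs <;> first | rfl | (exfalso; omega)

lemma Fval_zero (e1 e2 : ℕ) : Fval 0 e1 e2 = if e1 = 0 ∧ e2 = 0 then 1 else 0 := by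
  unfold Fval
  split_ifs with h1 h2 h3 <;> first | omega | (exfalso; omega) | skip
  · obtain rfl : e1 = 0 := by omega
    obtain rfl : e2 = 0 := by omega
    simp
  · obtain rfl : e1 = 0 := by omega
    rcases Nat.exists_eq_succ_of_ne_zero (show e2 ≠ 0 by omega) with ⟨k, rfl⟩
    simp [Nat.choose_eq_zero_of_lt]

lemma Gval_one (e1 e2 : ℕ) : Gval 1 e1 e2 = if e1 = 1 ∧ e2 ≤ 1 then 1 else 0 := by
  unfold Gval
  split_ifs with h1 h2 h3 h4 <;> first | (exfalso; omega) | skip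
  · obtain rfl : e1 = 1 := by omega
    obtain rfl : e2 = 0 := by omega
    simp
  · rfl
  · rfl

lemma rhs_eq (n e1 e2 : ℕ) :
    intChoose ((n : ℤ) - e2) ((n : ℤ) - e1) * intChoose (e1 : ℤ) (e2 : ℤ) = Fval n e1 e2 := by
  unfold intChoose Fval
  split_ifs with h1 h2 h3 h4 <;> first | omega | (exfalso; omega) | skip
  · rw [(show ((n : ℤ) - e2).toNat = n - e2 by omega), (show ((n : ℤ) - e1).toNat = n - e1 by omega),
      (show ((e1 : ℤ)).toNat = e1 by omega), (show ((e2 : ℤ)).toNat = e2 by omega)]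
  · rw [Nat.choose_eq_zero_of_lt (show e1 < e2 by omega)]; simp

/-! ### Combinatorial recurrences -/

lemma Fc_zero (e1 e2 : ℕ) : Fc 0 e1 e2 = if e1 = 0 ∧ e2 = 0 then 1 else 0 := by
  unfold Fc
  rw [Finset.Icc_eq_empty (by omega)]
  simp only [Finset.powerset_empty, Finset.singleton_product_singleton,
    Finset.filter_singleton]
  split_ifs with h1 h2 h3 <;> first | rfl | skip
  · exfalso; apply h2; simp only [Finset.card_empty] at h1; omega
  · exfalso; apply h1
    obtain ⟨rfl, rfl⟩ : e1 = 0 ∧ e2 = 0 := by omega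
    refine ⟨Finset.Subset.refl _, rfl, rfl, ?_⟩
    intro k hk; exact absurd hk (Finset.notMem_empty k)

lemma Gc_e1_zero (n e2 : ℕ) : Gc n 0 e2 = 0 := by
  unfold Gc
  rw [Finset.card_eq_zero, Finset.filter_eq_empty_iff]
  rintro T - ⟨⟨-, hc1, -, -⟩, hmem⟩
  rw [Finset.card_eq_zero] at hc1
  rw [hc1] at hmem
  exact Finset.notMem_empty _ hmem

lemma Bc_e2_zero (n e1 : ℕ) : Bc n e1 0 = 0 := by
  unfold Bc
  rw [Finset.card_eq_zero, Finset.filter_eq_empty_iff]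
  rintro T - ⟨⟨⟨-, -, hc2, -⟩, -⟩, hmem⟩
  rw [Finset.card_eq_zero] at hc2
  rw [hc2] at hmem
  exact Finset.notMem_empty _ hmem

lemma R1 (n e1 e2 : ℕ) : Fc (n + 1) e1 e2 = Fc n e1 e2 + Gc (n + 1) e1 e2 := by
  unfold Fc Gc
  have h := Finset.card_filter_add_card_filter_not
    (s := ((Finset.Icc 1 (n + 1)).powerset ×ˢ (Finset.Icc 1 (n + 1)).powerset).filter
      (fun T => T.2 ⊆ T.1 ∧ T.1.card = e1 ∧ T.2.card = e2 ∧
        ∀ k ∈ T.2, 2 ≤ k → k - 1 ∈ T.1))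
    (p := fun T => (n + 1) ∈ T.1)
  rw [Finset.filter_filter, Finset.filter_filter] at h
  have hset : (((Finset.Icc 1 (n + 1)).powerset ×ˢ (Finset.Icc 1 (n + 1)).powerset).filter
      (fun T => (T.2 ⊆ T.1 ∧ T.1.card = e1 ∧ T.2.card = e2 ∧
        (∀ k ∈ T.2, 2 ≤ k → k - 1 ∈ T.1)) ∧ ¬ (n + 1) ∈ T.1))
      = (((Finset.Icc 1 n).powerset ×ˢ (Finset.Icc 1 n).powerset).filter
      (fun T => T.2 ⊆ T.1 ∧ T.1.card = e1 ∧ T.2.card = e2 ∧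
        ∀ k ∈ T.2, 2 ≤ k → k - 1 ∈ T.1)) := by
    ext T
    simp only [Finset.mem_filter, Finset.mem_product, Finset.mem_powerset]
    constructor
    · rintro ⟨⟨hs1, hs2⟩, hP, hn1⟩
      have h1' : T.1 ⊆ Finset.Icc 1 n := by
        intro x hx
        have hxI := Finset.mem_Icc.mp (hs1 hx)
        have hne : x ≠ n + 1 := fun h => hn1 (h ▸ hx)
        exact Finset.mem_Icc.mpr ⟨hxI.1, by omega⟩
      exact ⟨⟨h1', fun x hx => h1' (hP.1 hx)⟩, hP⟩
    · rintro ⟨⟨hs1, hs2⟩, hP⟩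
      refine ⟨⟨hs1.trans (Finset.Icc_subset_Icc_right (by omega)),
        hs2.trans (Finset.Icc_subset_Icc_right (by omega))⟩, hP, fun h => ?_⟩
      have := Finset.mem_Icc.mp (hs1 h); omega
  rw [hset] at h
  omega

lemma Gsplit (n e1 e2 : ℕ) : Gc n e1 e2 = Bc n e1 e2 + Ac n e1 e2 := by
  unfold Gc Ac Bc
  have h := Finset.card_filter_add_card_filter_not
    (s := ((Finset.Icc 1 n).powerset ×ˢ (Finset.Icc 1 n).powerset).filter
      (fun T => (T.2 ⊆ T.1 ∧ T.1.card = e1 ∧ T.2.card = e2 ∧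
        ∀ k ∈ T.2, 2 ≤ k → k - 1 ∈ T.1) ∧ n ∈ T.1))
    (p := fun T => n ∈ T.2)
  rw [Finset.filter_filter, Finset.filter_filter] at h
  omega

lemma LemA (n E e2 : ℕ) : Ac (n + 1) (E + 1) e2 = Fc n E e2 := by
  unfold Ac Fc
  refine Finset.card_bij' (fun T _ => (T.1.erase (n + 1), T.2))
    (fun T _ => (insert (n + 1) T.1, T.2)) ?_ ?_ ?_ ?_
  · rintro ⟨T1, T2⟩ hT
    simp only [Finset.mem_filter, Finset.mem_product, Finset.mem_powerset] at hT ⊢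
    obtain ⟨⟨hs1, hs2⟩, ⟨⟨hsub, hc1, hc2, hcond⟩, hmem⟩, hnot⟩ := hT
    have h2sub : T2 ⊆ Finset.Icc 1 n := by
      intro x hx
      have hxI := Finset.mem_Icc.mp (hs2 hx)
      have hne : x ≠ n + 1 := fun h => hnot (h ▸ hx)
      exact Finset.mem_Icc.mpr ⟨hxI.1, by omega⟩
    refine ⟨⟨?_, h2sub⟩, ?_, ?_, hc2, ?_⟩
    · intro x hx
      obtain ⟨hne, hxT⟩ := Finset.mem_erase.mp hx
      have hxI := Finset.mem_Icc.mp (hs1 hxT)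
      exact Finset.mem_Icc.mpr ⟨hxI.1, by omega⟩
    · intro x hx
      exact Finset.mem_erase.mpr ⟨fun h => hnot (h ▸ hx), hsub hx⟩
    · rw [Finset.card_erase_of_mem hmem, hc1]; omega
    · intro k hk h2k
      have hkI := Finset.mem_Icc.mp (hs2 hk)
      have hkne : k ≠ n + 1 := fun h => hnot (h ▸ hk)
      exact Finset.mem_erase.mpr ⟨by omega, hcond k hk h2k⟩
  · rintro ⟨T1, T2⟩ hT
    simp only [Finset.mem_filter, Finset.mem_product, Finset.mem_powerset] at hT ⊢
    obtain ⟨⟨hs1, hs2⟩, hsub, hc1, hc2, hcond⟩ := hT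
    have hnotin : (n + 1) ∉ T1 := fun h => by
      have := Finset.mem_Icc.mp (hs1 h); omega
    refine ⟨⟨?_, hs2.trans (Finset.Icc_subset_Icc_right (by omega))⟩,
      ⟨⟨hsub.trans (Finset.subset_insert _ _), ?_, hc2, ?_⟩,
        Finset.mem_insert_self _ _⟩, ?_⟩
    · exact Finset.insert_subset (Finset.mem_Icc.mpr ⟨by omega, le_rfl⟩)
        (hs1.trans (Finset.Icc_subset_Icc_right (by omega)))
    · rw [Finset.card_insert_of_notMem hnotin, hc1]
    · intro k hk h2k
      exact Finset.mem_insert_of_mem (hcond k hk h2k)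
    · intro h
      have := Finset.mem_Icc.mp (hs2 h); omega
  · rintro ⟨T1, T2⟩ hT
    simp only [Finset.mem_filter, Finset.mem_product, Finset.mem_powerset] at hT
    obtain ⟨⟨hs1, hs2⟩, ⟨⟨hsub, hc1, hc2, hcond⟩, hmem⟩, hnot⟩ := hT
    simp [Finset.insert_erase hmem]
  · rintro ⟨T1, T2⟩ hT
    simp only [Finset.mem_filter, Finset.mem_product, Finset.mem_powerset] at hT
    obtain ⟨⟨hs1, hs2⟩, hsub, hc1, hc2, hcond⟩ := hT
    have hnotin : (n + 1) ∉ T1 := fun h => by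
      have := Finset.mem_Icc.mp (hs1 h); omega
    simp [Finset.erase_insert hnotin]

lemma LemB (n E F : ℕ) : Bc (n + 2) (E + 1) (F + 1) = Gc (n + 1) E F := by
  unfold Bc Gc
  refine Finset.card_bij' (fun T _ => (T.1.erase (n + 2), T.2.erase (n + 2)))
    (fun T _ => (insert (n + 2) T.1, insert (n + 2) T.2)) ?_ ?_ ?_ ?_
  · rintro ⟨T1, T2⟩ hT
    simp only [Finset.mem_filter, Finset.mem_product, Finset.mem_powerset] at hT ⊢
    obtain ⟨⟨hs1, hs2⟩, ⟨⟨hsub, hc1, hc2, hcond⟩, hmem1⟩, hmem2⟩ := hT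
    have herase : ∀ S : Finset ℕ, S ⊆ Finset.Icc 1 (n + 2) →
        S.erase (n + 2) ⊆ Finset.Icc 1 (n + 1) := by
      intro S hS x hx
      obtain ⟨hne, hxS⟩ := Finset.mem_erase.mp hx
      have hxI := Finset.mem_Icc.mp (hS hxS)
      exact Finset.mem_Icc.mpr ⟨hxI.1, by omega⟩
    refine ⟨⟨herase _ hs1, herase _ hs2⟩,
      ⟨Finset.erase_subset_erase _ hsub, ?_, ?_, ?_⟩, ?_⟩
    · rw [Finset.card_erase_of_mem hmem1, hc1]; omega
    · rw [Finset.card_erase_of_mem hmem2, hc2]; omega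
    · intro k hk h2k
      obtain ⟨hne, hkT⟩ := Finset.mem_erase.mp hk
      have hkI := Finset.mem_Icc.mp (hs2 hkT)
      exact Finset.mem_erase.mpr ⟨by omega, hcond k hkT h2k⟩
    · -- n + 1 ∈ T1.erase (n+2)
      have h := hcond (n + 2) hmem2 (by omega)
      exact Finset.mem_erase.mpr ⟨by omega, h⟩
  · rintro ⟨T1, T2⟩ hT
    simp only [Finset.mem_filter, Finset.mem_product, Finset.mem_powerset] at hT ⊢
    obtain ⟨⟨hs1, hs2⟩, ⟨hsub, hc1, hc2, hcond⟩, hmem1⟩ := hT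
    have hni1 : (n + 2) ∉ T1 := fun h => by
      have := Finset.mem_Icc.mp (hs1 h); omega
    have hni2 : (n + 2) ∉ T2 := fun h => by
      have := Finset.mem_Icc.mp (hs2 h); omega
    have hins : ∀ S : Finset ℕ, S ⊆ Finset.Icc 1 (n + 1) →
        insert (n + 2) S ⊆ Finset.Icc 1 (n + 2) := by
      intro S hS
      exact Finset.insert_subset (Finset.mem_Icc.mpr ⟨by omega, le_rfl⟩)
        (hS.trans (Finset.Icc_subset_Icc_right (by omega)))
    refine ⟨⟨hins _ hs1, hins _ hs2⟩,
      ⟨⟨Finset.insert_subset_insert _ hsub, ?_, ?_, ?_⟩,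
        Finset.mem_insert_self _ _⟩, Finset.mem_insert_self _ _⟩
    · rw [Finset.card_insert_of_notMem hni1, hc1]
    · rw [Finset.card_insert_of_notMem hni2, hc2]
    · intro k hk h2k
      rcases Finset.mem_insert.mp hk with h | h
      · subst h
        exact Finset.mem_insert_of_mem (by simpa using hmem1)
      · exact Finset.mem_insert_of_mem (hcond k h h2k)
  · rintro ⟨T1, T2⟩ hT
    simp only [Finset.mem_filter, Finset.mem_product, Finset.mem_powerset] at hT
    obtain ⟨⟨hs1, hs2⟩, ⟨⟨hsub, hc1, hc2, hcond⟩, hmem1⟩, hmem2⟩ := hT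
    simp [Finset.insert_erase hmem1, Finset.insert_erase hmem2]
  · rintro ⟨T1, T2⟩ hT
    simp only [Finset.mem_filter, Finset.mem_product, Finset.mem_powerset] at hT
    obtain ⟨⟨hs1, hs2⟩, ⟨hsub, hc1, hc2, hcond⟩, hmem1⟩ := hT
    have hni1 : (n + 2) ∉ T1 := fun h => by
      have := Finset.mem_Icc.mp (hs1 h); omega
    have hni2 : (n + 2) ∉ T2 := fun h => by
      have := Finset.mem_Icc.mp (hs2 h); omega
    simp [Finset.erase_insert hni1, Finset.erase_insert hni2]

lemma LemB1 (e1 e2 : ℕ) : Bc 1 e1 e2 = if e1 = 1 ∧ e2 = 1 then 1 else 0 := by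
  unfold Bc
  split_ifs with h
  · obtain ⟨rfl, rfl⟩ := h
    rw [Finset.card_eq_one]
    refine ⟨({1}, {1}), ?_⟩
    ext T
    simp only [Finset.mem_filter, Finset.mem_product, Finset.mem_powerset,
      Finset.Icc_self, Finset.mem_singleton]
    constructor
    · rintro ⟨⟨hs1, hs2⟩, ⟨⟨hsub, hc1, hc2, hcond⟩, hmem1⟩, hmem2⟩
      have h1 : T.1 = {1} := by
        rcases Finset.subset_singleton_iff.mp hs1 with h | h
        · rw [h] at hmem1; exact absurd hmem1 (Finset.notMem_empty _)
        · exact h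
      have h2 : T.2 = {1} := by
        rcases Finset.subset_singleton_iff.mp hs2 with h | h
        · rw [h] at hmem2; exact absurd hmem2 (Finset.notMem_empty _)
        · exact h
      exact Prod.ext h1 h2
    · rintro rfl
      refine ⟨⟨Finset.Subset.refl _, Finset.Subset.refl _⟩,
        ⟨⟨Finset.Subset.refl _, rfl, rfl, ?_⟩, Finset.mem_singleton_self _⟩,
        Finset.mem_singleton_self _⟩
      intro k hk h2k
      simp only [Finset.mem_singleton] at hk
      omega
  · rw [Finset.card_eq_zero, Finset.filter_eq_empty_iff]
    rintro T hT ⟨⟨⟨hsub, hc1, hc2, hcond⟩, hmem1⟩, hmem2⟩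
    rw [Finset.mem_product, Finset.mem_powerset, Finset.mem_powerset, Finset.Icc_self] at hT
    have h1 : T.1 = {1} := by
      rcases Finset.subset_singleton_iff.mp hT.1 with h' | h'
      · rw [h'] at hmem1; exact absurd hmem1 (Finset.notMem_empty _)
      · exact h'
    have h2 : T.2 = {1} := by
      rcases Finset.subset_singleton_iff.mp hT.2 with h' | h'
      · rw [h'] at hmem2; exact absurd hmem2 (Finset.notMem_empty _)
      · exact h'
    apply h
    rw [h1] at hc1; rw [h2] at hc2
    simp at hc1 hc2
    omega

/-! ### Main induction -/

lemma main (n : ℕ) : ∀ e1 e2 : ℕ, Fc n e1 e2 = Fval n e1 e2 ∧ Gc n e1 e2 = Gval n e1 e2 := by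
  induction n with
  | zero =>
    intro e1 e2
    constructor
    · rw [Fc_zero, Fval_zero]
    · rw [Gval_zero]
      unfold Gc
      rw [Finset.card_eq_zero, Finset.filter_eq_empty_iff]
      rintro T hT ⟨-, hmem⟩
      rw [Finset.mem_product, Finset.mem_powerset, Finset.mem_powerset,
        Finset.Icc_eq_empty (by omega)] at hT
      exact Finset.notMem_empty _ (hT.1 hmem)
  | succ n ih =>
    have hG : ∀ e1 e2 : ℕ, Gc (n + 1) e1 e2 = Gval (n + 1) e1 e2 := by
      intro e1 e2
      match e1 with
      | 0 => rw [Gc_e1_zero, Gval_zero_left]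
      | E + 1 =>
        rw [Gsplit, LemA, (ih E e2).1]
        match e2 with
        | 0 => rw [Bc_e2_zero, zero_add, N3]
        | F + 1 =>
          match n with
          | 0 =>
            rw [LemB1, Gval_one, Fval_zero]
            simp only [Nat.add_one_ne_zero, and_false, if_false, add_zero, zero_add]
            split_ifs <;> omega
          | m + 1 =>
            rw [LemB, (ih E F).2, N2 (m + 1) E F (by omega)]
            ring
    intro e1 e2
    refine ⟨?_, hG e1 e2⟩
    rw [R1, (ih e1 e2).1, hG e1 e2, N1]

end KroneckerCount

/-- The number of pairs `(T1, T2)` with `T2 ⊆ T1 ⊆ [1,n]`, `|T1| = e1`, `|T2| = e2`,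
such that for every `k ∈ T2` with `k ≥ 2` one has `k−1 ∈ T1`, equals
`C(n−e2, n−e1) · C(e1, e2)`. -/
theorem card_coordinate_subreps_regular_kronecker (n e1 e2 : ℕ) :
    (((Finset.Icc 1 n).powerset ×ˢ (Finset.Icc 1 n).powerset).filter
        (fun T => T.2 ⊆ T.1 ∧ T.1.card = e1 ∧ T.2.card = e2 ∧
          ∀ k ∈ T.2, 2 ≤ k → k - 1 ∈ T.1)).card
      = intChoose ((n : ℤ) - e2) ((n : ℤ) - e1) * intChoose (e1 : ℤ) (e2 : ℤ) := by
  rw [KroneckerCount.rhs_eq]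
  exact (KroneckerCount.main n e1 e2).1
end

section
/- For all integers n ≥ 0, 0 ≤ e1 ≤ n and 0 ≤ e2 ≤ n+1, the number of pairs (T1, T2) with T1 ⊆ [1,n], T2 ⊆ [1,n+1], |T1| = e1, |T2| = e2, such that for every k ∈ T2 one has (k ≤ n implies k ∈ T1) and (k ≥ 2 implies k−1 ∈ T1), is equal to the number of pairs (S1, S2) with S1 ⊆ [1,n+1], S2 ⊆ [1,n], |S1| = n+1−e2, |S2| = n−e1, such that for every k ∈ S2 both k ∈ S1 and k+1 ∈ S1. -/
/-- The number of pairs `(T1, T2)` with `T1 ⊆ [1,n]`, `T2 ⊆ [1,n+1]`, `|T1| = e1`,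
`|T2| = e2`, such that for every `k ∈ T2` one has `(k ≤ n → k ∈ T1)` and
`(k ≥ 2 → k−1 ∈ T1)`, equals the number of pairs `(S1, S2)` with `S1 ⊆ [1,n+1]`,
`S2 ⊆ [1,n]`, `|S1| = n+1−e2`, `|S2| = n−e1`, such that for every `k ∈ S2` both
`k ∈ S1` and `k+1 ∈ S1`. -/
theorem card_preinjective_eq_card_preprojective_kronecker (n e1 e2 : ℕ)
    (he1 : e1 ≤ n) (he2 : e2 ≤ n + 1) :
    (((Finset.Icc 1 n).powerset ×ˢ (Finset.Icc 1 (n + 1)).powerset).filter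
        (fun T => T.1.card = e1 ∧ T.2.card = e2 ∧
          ∀ k ∈ T.2, (k ≤ n → k ∈ T.1) ∧ (2 ≤ k → k - 1 ∈ T.1))).card
      = (((Finset.Icc 1 (n + 1)).powerset ×ˢ (Finset.Icc 1 n).powerset).filter
        (fun S => S.1.card = n + 1 - e2 ∧ S.2.card = n - e1 ∧
          ∀ k ∈ S.2, k ∈ S.1 ∧ k + 1 ∈ S.1)).card := by
  apply Finset.card_bij'
    (fun T _ => (Finset.Icc 1 (n + 1) \ T.2, Finset.Icc 1 n \ T.1))
    (fun S _ => (Finset.Icc 1 n \ S.2, Finset.Icc 1 (n + 1) \ S.1))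
  · intro T hT
    simp only [Finset.mem_filter, Finset.mem_product, Finset.mem_powerset] at hT ⊢
    obtain ⟨⟨h1, h2⟩, hc1, hc2, h3⟩ := hT
    refine ⟨⟨Finset.sdiff_subset, Finset.sdiff_subset⟩, ?_, ?_, ?_⟩
    · rw [Finset.card_sdiff_of_subset h2, Nat.card_Icc, hc2]; omega
    · rw [Finset.card_sdiff_of_subset h1, Nat.card_Icc, hc1]; omega
    · intro k hk
      rw [Finset.mem_sdiff, Finset.mem_Icc] at hk
      obtain ⟨⟨hk1, hkn⟩, hkT⟩ := hk
      constructor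
      · rw [Finset.mem_sdiff, Finset.mem_Icc]
        refine ⟨⟨hk1, by omega⟩, fun hmem => hkT ((h3 k hmem).1 hkn)⟩
      · rw [Finset.mem_sdiff, Finset.mem_Icc]
        refine ⟨⟨by omega, by omega⟩, fun hmem => ?_⟩
        have := (h3 (k + 1) hmem).2 (by omega)
        simp at this
        exact hkT this
  · intro S hS
    simp only [Finset.mem_filter, Finset.mem_product, Finset.mem_powerset] at hS ⊢
    obtain ⟨⟨h1, h2⟩, hc1, hc2, h3⟩ := hS
    have hS2 : S.2.card ≤ n := by
      have := Finset.card_le_card h2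
      simpa using this
    have hS1 : S.1.card ≤ n + 1 := by
      have := Finset.card_le_card h1
      simpa using this
    refine ⟨⟨Finset.sdiff_subset, Finset.sdiff_subset⟩, ?_, ?_, ?_⟩
    · rw [Finset.card_sdiff_of_subset h2, Nat.card_Icc, hc2]; omega
    · rw [Finset.card_sdiff_of_subset h1, Nat.card_Icc, hc1]; omega
    · intro k hk
      rw [Finset.mem_sdiff, Finset.mem_Icc] at hk
      obtain ⟨⟨hk1, hkn⟩, hkS⟩ := hk
      constructor
      · intro hkn'
        rw [Finset.mem_sdiff, Finset.mem_Icc]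
        exact ⟨⟨hk1, hkn'⟩, fun hmem => hkS (h3 k hmem).1⟩
      · intro h2k
        rw [Finset.mem_sdiff, Finset.mem_Icc]
        refine ⟨⟨by omega, by omega⟩, fun hmem => ?_⟩
        have := (h3 (k - 1) hmem).2
        have hkk : k - 1 + 1 = k := by omega
        rw [hkk] at this
        exact hkS this
  · intro T hT
    simp only [Finset.mem_filter, Finset.mem_product, Finset.mem_powerset] at hT
    obtain ⟨⟨h1, h2⟩, _⟩ := hT
    exact Prod.ext (Finset.sdiff_sdiff_eq_self h1) (Finset.sdiff_sdiff_eq_self h2)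
  · intro S hS
    simp only [Finset.mem_filter, Finset.mem_product, Finset.mem_powerset] at hS
    obtain ⟨⟨h1, h2⟩, _⟩ := hS
    exact Prod.ext (Finset.sdiff_sdiff_eq_self h1) (Finset.sdiff_sdiff_eq_self h2)
end

section
/- For all integers n ≥ 1 and e1, e2 ≥ 1, the number of pairs (T1, T2) with T2 ⊆ T1 ⊆ [1,n], |T1| = e1, |T2| = e2, and k−1 ∈ T1 for every k ∈ T2 with k ≥ 2, equals the number of pairs (S1, S2) with S2 ⊆ S1 ⊆ [1,n−1], |S1| = e1−1, |S2| = e2−1, and k−1 ∈ S1 for every k ∈ S2 with k ≥ 2, plus the number of pairs (R1, R2) with R1 ⊆ [1,n], R2 ⊆ [1,n−1], |R1| = e1, |R2| = e2, such that for every k ∈ R2 both k ∈ R1 and k+1 ∈ R1. -/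
private lemma card_image_sub_one (s : Finset ℕ) (hs : ∀ x ∈ s, 1 ≤ x) :
    (s.image (· - 1)).card = s.card :=
  Finset.card_image_of_injOn (fun a ha b hb h => by
    have := hs a ha; have := hs b hb; omega)

private lemma card_image_add_one (s : Finset ℕ) :
    (s.image (· + 1)).card = s.card :=
  Finset.card_image_of_injOn (fun a _ b _ h => by omega)

private lemma one_not_mem_image_add_one (s : Finset ℕ) (hs : ∀ x ∈ s, 1 ≤ x) :
    (1 : ℕ) ∉ s.image (· + 1) := by
  intro h
  simp only [Finset.mem_image] at h
  obtain ⟨a, ha, h2⟩ := h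
  have := hs a ha
  omega

/-- Splitting the count of coordinate subrepresentations of `Reg_1^n(0)` according to
whether `1 ∈ T2`: the count for `Reg_1^n(0)` in dimension `(e1,e2)` equals the count
for `Reg_1^{n−1}(0)` in dimension `(e1−1,e2−1)` plus the count for the preprojective
Kronecker module `M_1^{n−1}` in dimension `(e1,e2)`. -/
theorem card_regular_kronecker_recursion (n e1 e2 : ℕ)
    (hn : 1 ≤ n) (he1 : 1 ≤ e1) (he2 : 1 ≤ e2) :
    (((Finset.Icc 1 n).powerset ×ˢ (Finset.Icc 1 n).powerset).filter
        (fun T => T.2 ⊆ T.1 ∧ T.1.card = e1 ∧ T.2.card = e2 ∧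
          ∀ k ∈ T.2, 2 ≤ k → k - 1 ∈ T.1)).card
      = (((Finset.Icc 1 (n - 1)).powerset ×ˢ (Finset.Icc 1 (n - 1)).powerset).filter
          (fun S => S.2 ⊆ S.1 ∧ S.1.card = e1 - 1 ∧ S.2.card = e2 - 1 ∧
            ∀ k ∈ S.2, 2 ≤ k → k - 1 ∈ S.1)).card
        + (((Finset.Icc 1 n).powerset ×ˢ (Finset.Icc 1 (n - 1)).powerset).filter
          (fun R => R.1.card = e1 ∧ R.2.card = e2 ∧
            ∀ k ∈ R.2, k ∈ R.1 ∧ k + 1 ∈ R.1)).card := by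
  classical
  rw [← Finset.card_filter_add_card_filter_not
    (p := fun T : Finset ℕ × Finset ℕ => 1 ∈ T.2)]
  congr 1
  · -- case 1 ∈ T.2 : bijection with the S-count
    refine Finset.card_bij'
      (fun T _ => ((T.1.erase 1).image (· - 1), (T.2.erase 1).image (· - 1)))
      (fun S _ => (insert 1 (S.1.image (· + 1)), insert 1 (S.2.image (· + 1))))
      ?_ ?_ ?_ ?_
    · rintro ⟨T1, T2⟩ hT
      simp only [Finset.mem_filter, Finset.mem_product, Finset.mem_powerset] at hT ⊢
      obtain ⟨⟨⟨hT1, hT2⟩, hsub, hc1, hc2, hcond⟩, h1⟩ := hT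
      have h1T1 : (1 : ℕ) ∈ T1 := hsub h1
      have hb1 : ∀ x ∈ T1, 1 ≤ x ∧ x ≤ n := fun x hx => Finset.mem_Icc.mp (hT1 hx)
      have hb2 : ∀ x ∈ T2, 1 ≤ x ∧ x ≤ n := fun x hx => Finset.mem_Icc.mp (hT2 hx)
      refine ⟨⟨?_, ?_⟩, ?_, ?_, ?_, ?_⟩
      · intro x hx
        simp only [Finset.mem_image, Finset.mem_erase] at hx
        obtain ⟨a, ⟨ha1, ha⟩, rfl⟩ := hx
        have := hb1 a ha; rw [Finset.mem_Icc]; omega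
      · intro x hx
        simp only [Finset.mem_image, Finset.mem_erase] at hx
        obtain ⟨a, ⟨ha1, ha⟩, rfl⟩ := hx
        have := hb2 a ha; rw [Finset.mem_Icc]; omega
      · intro x hx
        simp only [Finset.mem_image, Finset.mem_erase] at hx ⊢
        obtain ⟨a, ⟨ha1, ha⟩, rfl⟩ := hx
        exact ⟨a, ⟨ha1, hsub ha⟩, rfl⟩
      · rw [card_image_sub_one _ (fun x hx => ((hb1 x (Finset.mem_erase.mp hx).2)).1),
          Finset.card_erase_of_mem h1T1, hc1]
      · rw [card_image_sub_one _ (fun x hx => ((hb2 x (Finset.mem_erase.mp hx).2)).1),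
          Finset.card_erase_of_mem h1, hc2]
      · intro k hk h2k
        simp only [Finset.mem_image, Finset.mem_erase] at hk ⊢
        obtain ⟨a, ⟨ha1, ha⟩, rfl⟩ := hk
        have ha2 : 2 ≤ a := by have := hb2 a ha; omega
        have ha3 : 3 ≤ a := by omega
        refine ⟨a - 1, ⟨by omega, hcond a ha (by omega)⟩, by omega⟩
    · rintro ⟨S1, S2⟩ hS
      simp only [Finset.mem_filter, Finset.mem_product, Finset.mem_powerset] at hS ⊢
      obtain ⟨⟨hS1, hS2⟩, hsub, hc1, hc2, hcond⟩ := hS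
      have hb1 : ∀ x ∈ S1, 1 ≤ x ∧ x ≤ n - 1 := fun x hx => Finset.mem_Icc.mp (hS1 hx)
      have hb2 : ∀ x ∈ S2, 1 ≤ x ∧ x ≤ n - 1 := fun x hx => Finset.mem_Icc.mp (hS2 hx)
      refine ⟨⟨⟨?_, ?_⟩, ?_, ?_, ?_, ?_⟩, ?_⟩
      · intro x hx
        simp only [Finset.mem_insert, Finset.mem_image] at hx
        rcases hx with rfl | ⟨a, ha, rfl⟩
        · exact Finset.mem_Icc.mpr ⟨le_refl 1, hn⟩
        · have := hb1 a ha; rw [Finset.mem_Icc]; omega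
      · intro x hx
        simp only [Finset.mem_insert, Finset.mem_image] at hx
        rcases hx with rfl | ⟨a, ha, rfl⟩
        · exact Finset.mem_Icc.mpr ⟨le_refl 1, hn⟩
        · have := hb2 a ha; rw [Finset.mem_Icc]; omega
      · intro x hx
        simp only [Finset.mem_insert, Finset.mem_image] at hx ⊢
        rcases hx with rfl | ⟨a, ha, rfl⟩
        · exact Or.inl rfl
        · exact Or.inr ⟨a, hsub ha, rfl⟩
      · rw [Finset.card_insert_of_notMem
            (one_not_mem_image_add_one S1 (fun x hx => (hb1 x hx).1)),
          card_image_add_one, hc1]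
        omega
      · rw [Finset.card_insert_of_notMem
            (one_not_mem_image_add_one S2 (fun x hx => (hb2 x hx).1)),
          card_image_add_one, hc2]
        omega
      · intro k hk h2k
        simp only [Finset.mem_insert, Finset.mem_image] at hk ⊢
        rcases hk with rfl | ⟨a, ha, rfl⟩
        · omega
        · rcases Nat.lt_or_ge a 2 with h | h
          · have : a = 1 := by have := hb2 a ha; omega
            subst this; exact Or.inl rfl
          · exact Or.inr ⟨a - 1, hcond a ha h, by omega⟩
      · exact Finset.mem_insert_self 1 _
    · rintro ⟨T1, T2⟩ hT
      simp only [Finset.mem_filter, Finset.mem_product, Finset.mem_powerset] at hT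
      obtain ⟨⟨⟨hT1, hT2⟩, hsub, _, _, _⟩, h1⟩ := hT
      have key : ∀ (s : Finset ℕ), s ⊆ Finset.Icc 1 n → 1 ∈ s →
          insert 1 (((s.erase 1).image (· - 1)).image (· + 1)) = s := by
        intro s hs h1s
        rw [Finset.image_image]
        have : (s.erase 1).image ((· + 1) ∘ (· - 1)) = s.erase 1 := by
          rw [Finset.image_congr (g := id), Finset.image_id]
          intro x hx
          simp only [Finset.mem_coe, Finset.mem_erase] at hx
          have := Finset.mem_Icc.mp (hs hx.2)
          simp only [Function.comp_apply, id_eq]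
          omega
        rw [this, Finset.insert_erase h1s]
      simp only [Prod.mk.injEq]
      exact ⟨key T1 hT1 (hsub h1), key T2 hT2 h1⟩
    · rintro ⟨S1, S2⟩ hS
      simp only [Finset.mem_filter, Finset.mem_product, Finset.mem_powerset] at hS
      obtain ⟨⟨hS1, hS2⟩, _, _, _, _⟩ := hS
      have key : ∀ (s : Finset ℕ), s ⊆ Finset.Icc 1 (n - 1) →
          ((insert 1 (s.image (· + 1))).erase 1).image (· - 1) = s := by
        intro s hs
        rw [Finset.erase_insert
            (one_not_mem_image_add_one s (fun x hx => (Finset.mem_Icc.mp (hs hx)).1)),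
          Finset.image_image]
        rw [Finset.image_congr (g := id), Finset.image_id]
        intro x _
        simp only [Function.comp_apply, id_eq]; omega
      simp only [Prod.mk.injEq]
      exact ⟨key S1 hS1, key S2 hS2⟩
  · -- case 1 ∉ T.2 : bijection with the R-count
    refine Finset.card_bij'
      (fun T _ => (T.1, T.2.image (· - 1)))
      (fun R _ => (R.1, R.2.image (· + 1)))
      ?_ ?_ ?_ ?_
    · rintro ⟨T1, T2⟩ hT
      simp only [Finset.mem_filter, Finset.mem_product, Finset.mem_powerset] at hT ⊢
      obtain ⟨⟨⟨hT1, hT2⟩, hsub, hc1, hc2, hcond⟩, h1⟩ := hT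
      have hb2 : ∀ x ∈ T2, 2 ≤ x ∧ x ≤ n := by
        intro x hx
        have := Finset.mem_Icc.mp (hT2 hx)
        constructor
        · rcases Nat.lt_or_ge x 2 with h | h
          · exfalso; have : x = 1 := by omega
            subst this; exact h1 hx
          · exact h
        · exact this.2
      refine ⟨⟨hT1, ?_⟩, hc1, ?_, ?_⟩
      · intro x hx
        simp only [Finset.mem_image] at hx
        obtain ⟨a, ha, rfl⟩ := hx
        have := hb2 a ha; rw [Finset.mem_Icc]; omega
      · rw [card_image_sub_one _ (fun x hx => by have := hb2 x hx; omega), hc2]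
      · intro k hk
        simp only [Finset.mem_image] at hk
        obtain ⟨a, ha, rfl⟩ := hk
        have := hb2 a ha
        constructor
        · exact hcond a ha this.1
        · have h' : a - 1 + 1 = a := by omega
          rw [h']; exact hsub ha
    · rintro ⟨R1, R2⟩ hR
      simp only [Finset.mem_filter, Finset.mem_product, Finset.mem_powerset] at hR ⊢
      obtain ⟨⟨hR1, hR2⟩, hc1, hc2, hcond⟩ := hR
      have hb2 : ∀ x ∈ R2, 1 ≤ x ∧ x ≤ n - 1 := fun x hx => Finset.mem_Icc.mp (hR2 hx)
      refine ⟨⟨⟨hR1, ?_⟩, ?_, hc1, ?_, ?_⟩, ?_⟩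
      · intro x hx
        simp only [Finset.mem_image] at hx
        obtain ⟨a, ha, rfl⟩ := hx
        have := hb2 a ha; rw [Finset.mem_Icc]; omega
      · intro x hx
        simp only [Finset.mem_image] at hx
        obtain ⟨a, ha, rfl⟩ := hx
        exact (hcond a ha).2
      · rw [card_image_add_one, hc2]
      · intro k hk h2k
        simp only [Finset.mem_image] at hk
        obtain ⟨a, ha, rfl⟩ := hk
        have h' : a + 1 - 1 = a := by omega
        rw [h']; exact (hcond a ha).1
      · exact one_not_mem_image_add_one R2 (fun x hx => (hb2 x hx).1)
    · rintro ⟨T1, T2⟩ hT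
      simp only [Finset.mem_filter, Finset.mem_product, Finset.mem_powerset] at hT
      obtain ⟨⟨⟨hT1, hT2⟩, hsub, _, _, hcond⟩, h1⟩ := hT
      have key : (T2.image (· - 1)).image (· + 1) = T2 := by
        rw [Finset.image_image, Finset.image_congr (g := id), Finset.image_id]
        intro x hx
        simp only [Finset.mem_coe] at hx
        have h1x := Finset.mem_Icc.mp (hT2 hx)
        have : x ≠ 1 := fun h => h1 (h ▸ hx)
        simp only [Function.comp_apply, id_eq]; omega
      simp only [Prod.mk.injEq]
      exact ⟨trivial, key⟩
    · rintro ⟨R1, R2⟩ hR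
      have key : (R2.image (· + 1)).image (· - 1) = R2 := by
        rw [Finset.image_image, Finset.image_congr (g := id), Finset.image_id]
        intro x _
        simp only [Function.comp_apply, id_eq]; omega
      simp only [Prod.mk.injEq]
      exact ⟨trivial, key⟩
end

section
/- Let n ≥ 1 and p ≥ 1 be integers, λ ∈ ℂ, and let N_1, N_2, …, N_{p+1} be ℂ-linear subspaces of ℂ^n. Then the conditions (N_{k+1} ⊆ N_k for all 1 ≤ k ≤ p, and J_n(λ)(N_{p+1}) ⊆ N_1) hold if and only if the conditions (N_{k+1} ⊆ N_k for all 1 ≤ k ≤ p, and J_n(0)(N_{p+1}) ⊆ N_1) hold. Consequently, for every dimension vector e the quiver Grassmannian of subrepresentations of the regular representation Reg_p^n(λ) of the quiver of type Ã_{p,1} coincides with that of Reg_p^n(0). -/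
/-- The `n × n` Jordan block with eigenvalue `lam`, as a linear operator on `ℂ^n`:
it sends `e_1 ↦ lam • e_1` and `e_k ↦ e_{k−1} + lam • e_k` for `2 ≤ k ≤ n`. -/
noncomputable def jordanBlock (n : ℕ) (lam : ℂ) : (Fin n → ℂ) →ₗ[ℂ] (Fin n → ℂ) :=
  Matrix.toLin'
    (Matrix.of fun i j : Fin n =>
      if i = j then lam else if (j : ℕ) = (i : ℕ) + 1 then 1 else 0)

/-! `J_n(λ) = J_n(0) + λ • id`, and adding a multiple of the identity to an operator does not
change which images `f(N_{p+1})` land in `N_1`, as long as `N_{p+1} ⊆ N_1`; the chain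
condition guarantees exactly this inclusion. -/

theorem jordanBlock_eq_add_smul_id (n : ℕ) (lam : ℂ) :
    jordanBlock n lam = jordanBlock n 0 + lam • LinearMap.id := by
  have hmatrix : (Matrix.of fun i j : Fin n =>
        if i = j then lam else if (j : ℕ) = (i : ℕ) + 1 then 1 else 0) =
      (Matrix.of fun i j : Fin n =>
        if i = j then (0 : ℂ) else if (j : ℕ) = (i : ℕ) + 1 then 1 else 0) +
        lam • (1 : Matrix (Fin n) (Fin n) ℂ) := by
    ext i j
    by_cases h : i = j <;> simp [h]
  rw [jordanBlock, hmatrix, map_add, map_smul, Matrix.toLin'_one, jordanBlock]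

theorem Submodule.map_add_smul_id_le_iff {R M : Type*} [CommRing R] [AddCommGroup M]
    [Module R M] (f : M →ₗ[R] M) (c : R) {U V : Submodule R M} (hUV : U ≤ V) :
    U.map (f + c • LinearMap.id) ≤ V ↔ U.map f ≤ V := by
  rw [Submodule.map_le_iff_le_comap, Submodule.map_le_iff_le_comap]
  exact forall₂_congr fun x hx => V.add_mem_iff_left (V.smul_mem c (hUV hx))

theorem succ_le_one_of_forall_succ_le {α : Type*} [Preorder α] {N : ℕ → α} {p : ℕ}
    (hchain : ∀ k, 1 ≤ k → k ≤ p → N (k + 1) ≤ N k) : N (p + 1) ≤ N 1 := by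
  induction p with
  | zero => exact le_rfl
  | succ m ih =>
    exact (hchain (m + 1) (by omega) le_rfl).trans
      (ih fun k hk hkm => hchain k hk (by omega))

theorem regular_grassmannian_independent_of_eigenvalue_general (n p : ℕ)
    (lam : ℂ) :
    (∀ N : ℕ → Submodule ℂ (Fin n → ℂ),
      ((∀ k, 1 ≤ k → k ≤ p → N (k + 1) ≤ N k) ∧
          (N (p + 1)).map (jordanBlock n lam) ≤ N 1) ↔
        ((∀ k, 1 ≤ k → k ≤ p → N (k + 1) ≤ N k) ∧
          (N (p + 1)).map (jordanBlock n 0) ≤ N 1)) ∧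
    (∀ e : ℕ → ℕ,
      {N : ℕ → Submodule ℂ (Fin n → ℂ) |
          (∀ k, 1 ≤ k → k ≤ p → N (k + 1) ≤ N k) ∧
          (N (p + 1)).map (jordanBlock n lam) ≤ N 1 ∧
          (∀ i, 1 ≤ i → i ≤ p + 1 → Module.finrank ℂ (N i) = e i)} =
        {N : ℕ → Submodule ℂ (Fin n → ℂ) |
          (∀ k, 1 ≤ k → k ≤ p → N (k + 1) ≤ N k) ∧
          (N (p + 1)).map (jordanBlock n 0) ≤ N 1 ∧
          (∀ i, 1 ≤ i → i ≤ p + 1 → Module.finrank ℂ (N i) = e i)}) := by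
  have key : ∀ N : ℕ → Submodule ℂ (Fin n → ℂ), (∀ k, 1 ≤ k → k ≤ p → N (k + 1) ≤ N k) →
      ((N (p + 1)).map (jordanBlock n lam) ≤ N 1 ↔ (N (p + 1)).map (jordanBlock n 0) ≤ N 1) :=
    fun N hchain => by
      rw [jordanBlock_eq_add_smul_id]
      exact Submodule.map_add_smul_id_le_iff _ lam (succ_le_one_of_forall_succ_le hchain)
  exact ⟨fun N => and_congr_right (key N),
    fun e => Set.ext fun N => and_congr_right fun hchain => and_congr_left' (key N hchain)⟩

/-- For a tuple of subspaces `N_1, …, N_{p+1}` of `ℂ^n`, the subrepresentation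
conditions for `Reg_p^n(λ)` hold iff those for `Reg_p^n(0)` hold; consequently the
quiver Grassmannians of `Reg_p^n(λ)` and `Reg_p^n(0)` coincide for every dimension
vector `e`. -/
theorem regular_grassmannian_independent_of_eigenvalue (n p : ℕ)
    (hn : 1 ≤ n) (hp : 1 ≤ p) (lam : ℂ) :
    (∀ N : ℕ → Submodule ℂ (Fin n → ℂ),
      ((∀ k, 1 ≤ k → k ≤ p → N (k + 1) ≤ N k) ∧
          (N (p + 1)).map (jordanBlock n lam) ≤ N 1) ↔
        ((∀ k, 1 ≤ k → k ≤ p → N (k + 1) ≤ N k) ∧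
          (N (p + 1)).map (jordanBlock n 0) ≤ N 1)) ∧
    (∀ e : ℕ → ℕ,
      {N : ℕ → Submodule ℂ (Fin n → ℂ) |
          (∀ k, 1 ≤ k → k ≤ p → N (k + 1) ≤ N k) ∧
          (N (p + 1)).map (jordanBlock n lam) ≤ N 1 ∧
          (∀ i, 1 ≤ i → i ≤ p + 1 → Module.finrank ℂ (N i) = e i)} =
        {N : ℕ → Submodule ℂ (Fin n → ℂ) |
          (∀ k, 1 ≤ k → k ≤ p → N (k + 1) ≤ N k) ∧
          (N (p + 1)).map (jordanBlock n 0) ≤ N 1 ∧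
          (∀ i, 1 ≤ i → i ≤ p + 1 → Module.finrank ℂ (N i) = e i)}) :=
  regular_grassmannian_independent_of_eigenvalue_general n p lam
end

section
/- Let n ≥ 0 and let a, b, c, d be nonnegative integers with a ≥ 1. Then the number of quadruples (T_1, T_t, T_{t+1}, T_{p+1}) of sets with T_t ⊆ T_1 ⊆ [1,n+1], T_{p+1} ⊆ T_{t+1} ⊆ [1,n], |T_1| = a, |T_t| = b, |T_{t+1}| = c, |T_{p+1}| = d, and such that T_{t+1} ⊆ T_t and {k+1 : k ∈ T_{p+1}} ⊆ T_1, equals C(a−1, d)·C(n+1−b, a−b)·C(n+1−c, b−c)·C(n−d, c−d). -/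
/-!
Send a quadruple to `(T_1, T_{p+1})`. The fibre over a pair is a chain
`T_{p+1} ⊆ T_{t+1} ⊆ T_1 ∩ [1,n]`, `T_{t+1} ⊆ T_t ⊆ T_1`, with
`C(|T_1 ∩ [1,n]| - d, c - d) · C(a - c, b - c)` elements, and `|T_1 ∩ [1,n]|` is `a - 1` or `a`
according as `n + 1 ∈ T_1` or not. The pairs `(T, D)` with `D ∪ (D + 1) ⊆ T ⊆ [1,m]`, `|T| = a`,
`|D| = d` number `C(a-1, d) · C(m-d, a-d)`: deleting `m` from `T` (and `m - 1` from `D`) gives a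
recursion in `m`, solved jointly with the count of the pairs having `m ∈ T`. Pascal's rule and
trinomial revision combine the two kinds of fibres into the product formula.
-/

open Finset

section Chains

variable {α : Type*} [DecidableEq α] {s t u : Finset α} {b c : ℕ}

theorem card_filter_powerset_superset_card_eq (hst : s ⊆ t) (hsc : #s ≤ c) :
    #{v ∈ t.powerset | s ⊆ v ∧ #v = c} = (#t - #s).choose (c - #s) := by
  rw [← card_sdiff_of_subset hst, ← card_powersetCard]
  refine card_nbij' (· \ s) (s ∪ ·) ?_ ?_ ?_ ?_ <;> intro v hv <;>
    simp only [coe_filter, mem_powerset, Set.mem_ofPred_eq, mem_coe, mem_powersetCard,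
      subset_sdiff] at hv ⊢
  · refine ⟨⟨sdiff_subset.trans hv.1, sdiff_disjoint⟩, ?_⟩
    rw [card_sdiff_of_subset hv.2.1, hv.2.2]
  · refine ⟨union_subset hst hv.1.1, subset_union_left, ?_⟩
    rw [card_union_of_disjoint hv.1.2.symm]
    omega
  · exact union_sdiff_of_subset hv.2.1
  · exact union_sdiff_cancel_left hv.1.2.symm

theorem card_filter_chains (hsu : s ⊆ u) (hut : u ⊆ t) (hsc : #s ≤ c) (hcb : c ≤ b) :
    #{r ∈ u.powerset ×ˢ t.powerset | s ⊆ r.1 ∧ #r.1 = c ∧ r.1 ⊆ r.2 ∧ #r.2 = b} =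
      (#u - #s).choose (c - #s) * (#t - c).choose (b - c) := by
  rw [card_eq_sum_card_fiberwise (f := Prod.fst) (t := {e ∈ u.powerset | s ⊆ e ∧ #e = c})
    fun r hr => by simp_all]
  rw [← card_filter_powerset_superset_card_eq hsu hsc, ← smul_eq_mul, ← sum_const]
  refine sum_congr rfl fun e he => ?_
  simp only [mem_filter, mem_powerset] at he
  rw [← he.2.2, ← card_filter_powerset_superset_card_eq (he.1.trans hut) (he.2.2 ▸ hcb)]
  refine card_nbij' Prod.snd (e, ·) ?_ ?_ ?_ ?_ <;> intro r hr <;>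
    simp only [coe_filter, mem_filter, mem_product, mem_powerset, Set.mem_ofPred_eq] at hr ⊢ <;>
    grind

end Chains

/-- The pairs `(T_1, T_{p+1})` of the statement, with `[1,n+1]` replaced by `[1,m]`. -/
def shiftPairs (m a d : ℕ) : Finset (Finset ℕ × Finset ℕ) :=
  {p ∈ (Icc 1 m).powerset ×ˢ (Icc 1 m).powerset |
    #p.1 = a ∧ #p.2 = d ∧ p.2 ⊆ p.1 ∧ ∀ k ∈ p.2, k + 1 ∈ p.1}

def topPairs (m a d : ℕ) : Finset (Finset ℕ × Finset ℕ) :=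
  {p ∈ shiftPairs m a d | m ∈ p.1}

def shiftPairsCount (m a d : ℕ) : ℕ :=
  (a - 1).choose d * (m - d).choose (a - d)

def topPairsCount (m a d : ℕ) : ℕ :=
  if 1 ≤ a ∧ a ≤ m then (a - 1).choose d * (m - 1 - d).choose (a - 1 - d) else 0

section ShiftPairs

variable {m a d : ℕ} {p : Finset ℕ × Finset ℕ}

theorem mem_shiftPairs : p ∈ shiftPairs m a d ↔
    p.1 ⊆ Icc 1 m ∧ #p.1 = a ∧ #p.2 = d ∧ p.2 ⊆ p.1 ∧ ∀ k ∈ p.2, k + 1 ∈ p.1 := by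
  simp only [shiftPairs, mem_filter, mem_product, mem_powerset]
  exact ⟨fun h => ⟨h.1.1, h.2⟩, fun h => ⟨⟨h.1, h.2.2.2.1.trans h.1⟩, h.2⟩⟩

theorem filter_shiftPairs_succ_not_mem :
    {p ∈ shiftPairs (m + 1) a d | m + 1 ∉ p.1} = shiftPairs m a d := by
  ext p
  simp only [mem_filter, mem_shiftPairs, subset_iff, mem_Icc]
  grind

theorem topPairs_zero : topPairs 0 a d = ∅ := by
  ext p
  simp only [topPairs, mem_filter, mem_shiftPairs, subset_iff, mem_Icc]
  grind

theorem topPairs_zero_size : topPairs m 0 d = ∅ := by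
  ext p
  simp only [topPairs, mem_filter, mem_shiftPairs, card_eq_zero]
  grind

theorem card_filter_topPairs_succ_not_mem :
    #{p ∈ topPairs (m + 1) (a + 1) d | m ∉ p.2} = #(shiftPairs m a d) := by
  refine card_nbij' (fun p => (p.1.erase (m + 1), p.2)) (fun p => (insert (m + 1) p.1, p.2))
    ?_ ?_ ?_ ?_ <;> intro p hp <;>
    simp only [topPairs, coe_filter, mem_coe, mem_filter, mem_shiftPairs, Set.mem_ofPred_eq,
      subset_iff, mem_Icc] at hp ⊢
  · grind
  · grind
  · exact Prod.ext (insert_erase hp.1.2) rfl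
  · exact Prod.ext (erase_insert fun h => by grind) rfl

theorem card_filter_topPairs_succ_mem :
    #{p ∈ topPairs (m + 1) (a + 1) (d + 1) | m ∈ p.2} = #(topPairs m a d) := by
  refine card_nbij' (fun p => (p.1.erase (m + 1), p.2.erase m))
    (fun p => (insert (m + 1) p.1, insert m p.2)) ?_ ?_ ?_ ?_ <;> intro p hp <;>
    simp only [topPairs, coe_filter, mem_filter, mem_shiftPairs, Set.mem_ofPred_eq,
      subset_iff, mem_Icc] at hp ⊢
  · grind
  · grind
  · exact Prod.ext (insert_erase hp.1.2) (insert_erase hp.2)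
  · exact Prod.ext (erase_insert fun h => by grind) (erase_insert fun h => by grind)

theorem card_shiftPairs_succ :
    #(shiftPairs (m + 1) a d) = #(topPairs (m + 1) a d) + #(shiftPairs m a d) := by
  rw [← card_filter_add_card_filter_not (s := shiftPairs (m + 1) a d) (fun p => m + 1 ∈ p.1),
    filter_shiftPairs_succ_not_mem, topPairs]

theorem card_topPairs_succ_succ_zero :
    #(topPairs (m + 1) (a + 1) 0) = #(shiftPairs m a 0) := by
  rw [← card_filter_topPairs_succ_not_mem, filter_true_of_mem]
  intro p hp
  simp only [topPairs, mem_filter, mem_shiftPairs, card_eq_zero] at hp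
  simp [hp.1.2.2.1]

theorem card_topPairs_succ_succ_succ :
    #(topPairs (m + 1) (a + 1) (d + 1)) = #(shiftPairs m a (d + 1)) + #(topPairs m a d) := by
  rw [← card_filter_add_card_filter_not (s := topPairs (m + 1) (a + 1) (d + 1))
    (fun p => m ∈ p.2),
    card_filter_topPairs_succ_mem, card_filter_topPairs_succ_not_mem, add_comm]

theorem card_shiftPairs_zero : #(shiftPairs 0 a d) = shiftPairsCount 0 a d := by
  rcases a with _ | a <;> rcases d with _ | d <;>
    simp [shiftPairs, shiftPairsCount, filter_singleton]
  grind

theorem topPairsCount_zero : topPairsCount 0 a d = 0 := by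
  simp only [topPairsCount, ite_eq_right_iff]
  omega

theorem shiftPairsCount_succ :
    shiftPairsCount (m + 1) a d = topPairsCount (m + 1) a d + shiftPairsCount m a d := by
  rcases a with _ | a
  · simp [shiftPairsCount, topPairsCount]
  simp only [shiftPairsCount, topPairsCount, add_tsub_cancel_right, le_add_iff_nonneg_left,
    zero_le, true_and, add_le_add_iff_right]
  rcases le_or_gt d a with hda | hda
  swap
  · simp [Nat.choose_eq_zero_of_lt hda]
  rcases le_or_gt d m with hdm | hdm
  · rw [Nat.sub_add_comm hda, Nat.sub_add_comm hdm, Nat.choose_succ_succ', mul_add]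
    split_ifs with ham
    · rfl
    · simp [Nat.choose_eq_zero_of_lt (show m - d < a - d by omega)]
  · rw [if_neg (by omega), Nat.choose_eq_zero_of_lt (show m - d < a + 1 - d by omega),
      Nat.choose_eq_zero_of_lt (show m + 1 - d < a + 1 - d by omega)]
    simp

theorem topPairsCount_succ_succ_zero :
    topPairsCount (m + 1) (a + 1) 0 = shiftPairsCount m a 0 := by
  simp only [topPairsCount, shiftPairsCount, le_add_iff_nonneg_left, zero_le, true_and,
    add_le_add_iff_right, add_tsub_cancel_right, Nat.choose_zero_right, one_mul, tsub_zero]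
  split_ifs with ham
  · rfl
  · exact (Nat.choose_eq_zero_of_lt (not_le.1 ham)).symm

theorem topPairsCount_succ_succ_succ :
    topPairsCount (m + 1) (a + 1) (d + 1) = shiftPairsCount m a (d + 1) + topPairsCount m a d := by
  rcases a with _ | a
  · simp [topPairsCount, shiftPairsCount]
  simp only [topPairsCount, shiftPairsCount, add_tsub_cancel_right, Nat.add_sub_add_right,
    Nat.sub_sub, add_comm 1 d, le_add_iff_nonneg_left, zero_le, true_and, add_le_add_iff_right]
  split_ifs with ham
  · rw [Nat.choose_succ_succ']
    ring
  · rcases le_or_gt a d with had | had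
    · simp [Nat.choose_eq_zero_of_lt (Nat.lt_succ_of_le had)]
    · simp [Nat.choose_eq_zero_of_lt (show m - (d + 1) < a - d by omega)]

theorem card_shiftPairs_and_topPairs (m : ℕ) :
    (∀ a d, #(shiftPairs m a d) = shiftPairsCount m a d) ∧
      ∀ a d, #(topPairs m a d) = topPairsCount m a d := by
  induction m with
  | zero =>
    exact ⟨fun a d => card_shiftPairs_zero, fun a d => by simp [topPairs_zero, topPairsCount_zero]⟩
  | succ m ih =>
    obtain ⟨hN, hT⟩ := ih
    have hT' (a d : ℕ) : #(topPairs (m + 1) a d) = topPairsCount (m + 1) a d := by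
      rcases a with _ | a
      · simp [topPairs_zero_size, topPairsCount]
      rcases d with _ | d
      · rw [card_topPairs_succ_succ_zero, hN, topPairsCount_succ_succ_zero]
      · rw [card_topPairs_succ_succ_succ, hN, hT, topPairsCount_succ_succ_succ]
    exact ⟨fun a d => by rw [card_shiftPairs_succ, hT', hN, shiftPairsCount_succ], hT'⟩

theorem card_shiftPairs (m a d : ℕ) : #(shiftPairs m a d) = shiftPairsCount m a d :=
  (card_shiftPairs_and_topPairs m).1 a d

theorem card_topPairs (m a d : ℕ) : #(topPairs m a d) = topPairsCount m a d :=
  (card_shiftPairs_and_topPairs m).2 a d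

end ShiftPairs

theorem choose_mul_choose_add_choose_succ_mul_choose {n k s : ℕ} (hsk : s ≤ k + 1)
    (hsn : s ≤ n) :
    n.choose k * k.choose s + n.choose (k + 1) * (k + 1).choose s =
      n.choose s * (n + 1 - s).choose (k + 1 - s) := by
  rw [Nat.choose_mul hsk]
  rcases hsk.eq_or_lt with rfl | hsk
  · simp [Nat.choose_succ_self]
  rw [Nat.choose_mul (Nat.le_of_lt_succ hsk), ← mul_add, Nat.sub_add_comm hsn,
    Nat.sub_add_comm (Nat.le_of_lt_succ hsk), Nat.choose_succ_succ']

def quadruples (n a b c d : ℕ) : Finset (Finset ℕ × Finset ℕ × Finset ℕ × Finset ℕ) :=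
  {q ∈ (Icc 1 (n + 1)).powerset ×ˢ (Icc 1 (n + 1)).powerset ×ˢ
      (Icc 1 n).powerset ×ˢ (Icc 1 n).powerset |
    #q.1 = a ∧ #q.2.1 = b ∧ #q.2.2.1 = c ∧ #q.2.2.2 = d ∧
      q.2.1 ⊆ q.1 ∧ q.2.2.2 ⊆ q.2.2.1 ∧ q.2.2.1 ⊆ q.2.1 ∧
      ∀ k ∈ q.2.2.2, k + 1 ∈ q.1}

section Quadruples

variable {n a b c d : ℕ} {q : Finset ℕ × Finset ℕ × Finset ℕ × Finset ℕ}

theorem le_of_mem_quadruples (hq : q ∈ quadruples n a b c d) :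
    d ≤ c ∧ c ≤ b ∧ b ≤ a ∧ a ≤ n + 1 ∧ c ≤ n := by
  simp only [quadruples, mem_filter, mem_product, mem_powerset] at hq
  obtain ⟨⟨h1, -, h3, -⟩, rfl, rfl, rfl, rfl, h21, h43, h32, -⟩ := hq
  have := card_le_card h1
  have := card_le_card h3
  simp only [Nat.card_Icc] at *
  exact ⟨card_le_card h43, card_le_card h32, card_le_card h21, by omega, by omega⟩

theorem mem_shiftPairs_of_mem_quadruples (hq : q ∈ quadruples n a b c d) :
    (q.1, q.2.2.2) ∈ shiftPairs (n + 1) a d := by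
  simp only [quadruples, mem_filter, mem_product, mem_powerset] at hq
  obtain ⟨⟨h1, -⟩, ha, -, -, hd, h21, h43, h32, hsucc⟩ := hq
  exact mem_shiftPairs.2 ⟨h1, ha, hd, (h43.trans h32).trans h21, hsucc⟩

theorem card_filter_quadruples_eq {p : Finset ℕ × Finset ℕ} (hp : p ∈ shiftPairs (n + 1) a d)
    (hdc : d ≤ c) (hcb : c ≤ b) :
    #{q ∈ quadruples n a b c d | (q.1, q.2.2.2) = p} =
      (#(p.1.erase (n + 1)) - d).choose (c - d) * (a - c).choose (b - c) := by
  obtain ⟨hp1, rfl, rfl, hp21, hpsucc⟩ := mem_shiftPairs.1 hp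
  have hp2 : p.2 ⊆ p.1.erase (n + 1) := fun k hk => by
    have := hp1 (hpsucc k hk)
    simp only [mem_Icc] at this
    exact mem_erase.2 ⟨by omega, hp21 hk⟩
  rw [← card_filter_chains hp2 (erase_subset _ _) hdc hcb]
  refine card_nbij' (fun q => (q.2.2.1, q.2.1)) (fun r => (p.1, r.2, r.1, p.2)) ?_ ?_ ?_ ?_ <;>
    intro q hq <;>
    simp only [quadruples, coe_filter, mem_filter, mem_product, mem_powerset, Set.mem_ofPred_eq,
      subset_iff, mem_Icc, mem_erase] at hq ⊢ <;>
    grind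

theorem card_quadruples_succ (hdc : d ≤ c) (hcb : c ≤ b) (hba : b ≤ a + 1) (han : a ≤ n)
    (hcn : c ≤ n) :
    #(quadruples n (a + 1) b c d) =
      a.choose d * (n + 1 - b).choose (a + 1 - b) * (n + 1 - c).choose (b - c) *
        (n - d).choose (c - d) := by
  have hfiber (p) (hp : p ∈ shiftPairs (n + 1) (a + 1) d) :
      #{q ∈ quadruples n (a + 1) b c d | (q.1, q.2.2.2) = p} =
        (if n + 1 ∈ p.1 then (a - d).choose (c - d) else (a + 1 - d).choose (c - d)) *
          (a + 1 - c).choose (b - c) := by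
    rw [card_filter_quadruples_eq hp hdc hcb, card_erase_eq_ite, (mem_shiftPairs.1 hp).2.1]
    split_ifs <;> simp
  rw [card_eq_sum_card_fiberwise fun q hq => mem_shiftPairs_of_mem_quadruples hq,
    sum_congr rfl hfiber, ← sum_mul, sum_ite, sum_const, sum_const, smul_eq_mul, smul_eq_mul,
    filter_shiftPairs_succ_not_mem, ← topPairs.eq_1, card_topPairs, card_shiftPairs,
    topPairsCount, shiftPairsCount, if_pos (by omega)]
  simp only [add_tsub_cancel_right]
  rcases le_or_gt d a with hda | hda
  swap
  · simp [Nat.choose_eq_zero_of_lt hda]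
  have hpascal := choose_mul_choose_add_choose_succ_mul_choose (n := n - d) (k := a - d)
    (s := c - d) (by omega) (by omega)
  rw [show n - d + 1 - (c - d) = n + 1 - c by omega,
    show a - d + 1 - (c - d) = a + 1 - c by omega, ← Nat.sub_add_comm hda] at hpascal
  calc
    _ = a.choose d * ((n - d).choose (a - d) * (a - d).choose (c - d) +
          (n - d).choose (a + 1 - d) * (a + 1 - d).choose (c - d)) *
          (a + 1 - c).choose (b - c) := by
      ring
    _ = a.choose d * (n - d).choose (c - d) *
          ((n + 1 - c).choose (a + 1 - c) * (a + 1 - c).choose (b - c)) := by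
      rw [hpascal]
      ring
    _ = _ := by
      rw [Nat.choose_mul (by omega), show n + 1 - c - (b - c) = n + 1 - b by omega,
        show a + 1 - c - (b - c) = a + 1 - b by omega]
      ring

end Quadruples

theorem intChoose_eq_choose {x y : ℤ} {p q : ℕ} (hx : x = p) (hy : y = q) :
    intChoose x y = p.choose q := by
  subst hx hy
  simp [intChoose]

theorem intChoose_eq_zero_iff {x y : ℤ} : intChoose x y = 0 ↔ y < 0 ∨ x < y := by
  unfold intChoose
  split_ifs with h
  · rw [Nat.choose_eq_zero_iff]
    omega
  · simp only [true_iff]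
    omega

/-- The number of quadruples `(T1, Tt, Tt1, Tp1)` with `Tt ⊆ T1 ⊆ [1,n+1]`,
`Tp1 ⊆ Tt1 ⊆ [1,n]`, of cardinalities `a, b, c, d` respectively, with `Tt1 ⊆ Tt`
and `{k+1 : k ∈ Tp1} ⊆ T1`, equals
`C(a−1, d) · C(n+1−b, a−b) · C(n+1−c, b−c) · C(n−d, c−d)`. -/
theorem card_quadruples_preprojective (n a b c d : ℕ) (ha : 1 ≤ a) :
    (((Finset.Icc 1 (n + 1)).powerset ×ˢ (Finset.Icc 1 (n + 1)).powerset ×ˢ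
        (Finset.Icc 1 n).powerset ×ˢ (Finset.Icc 1 n).powerset).filter
        (fun q => q.1.card = a ∧ q.2.1.card = b ∧ q.2.2.1.card = c ∧ q.2.2.2.card = d ∧
          q.2.1 ⊆ q.1 ∧ q.2.2.2 ⊆ q.2.2.1 ∧ q.2.2.1 ⊆ q.2.1 ∧
          ∀ k ∈ q.2.2.2, k + 1 ∈ q.1)).card
      = intChoose ((a : ℤ) - 1) (d : ℤ) *
        intChoose ((n : ℤ) + 1 - b) ((a : ℤ) - b) *
        intChoose ((n : ℤ) + 1 - c) ((b : ℤ) - c) *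
        intChoose ((n : ℤ) - d) ((c : ℤ) - d) := by
  change #(quadruples n a b c d) = _
  obtain ⟨a, rfl⟩ := Nat.exists_eq_add_of_le' ha
  by_cases h : d ≤ c ∧ c ≤ b ∧ b ≤ a + 1 ∧ a ≤ n ∧ c ≤ n
  · obtain ⟨hdc, hcb, hba, han, hcn⟩ := h
    rw [card_quadruples_succ hdc hcb hba han hcn, intChoose_eq_choose (p := a) (q := d),
      intChoose_eq_choose (p := n + 1 - b) (q := a + 1 - b),
      intChoose_eq_choose (p := n + 1 - c) (q := b - c),
      intChoose_eq_choose (p := n - d) (q := c - d)] <;> omega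
  · rw [card_eq_zero.2 (eq_empty_of_forall_notMem fun q hq =>
      h (by have := le_of_mem_quadruples hq; omega))]
    symm
    simp only [mul_eq_zero, intChoose_eq_zero_iff]
    omega
end
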